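/- arXiv:2102.01533 — 11 statements merged into one kernel-verified Lean document; each statement's English description precedes it below -/
import Mathlib

section
/- (Sure optimality of the Doob martingale.) The Doob martingale M* of the Snell envelope is surely optimal at every date: for every 0 ≤ j ≤ J, Y*_j = max_{j ≤ r ≤ J} (Z_r − M*_r + M*_j) almost surely; in particular M* ∈ M^∘∘. -/
open MeasureTheory Finset

/-- **Sure optimality of the Doob martingale.** The Doob martingale `M⋆` of the Snell envelope
`Y` is surely optimal at every date: for every `0 ≤ j ≤ J`,
`Y⋆ j = max_{j ≤ r ≤ J} (Z r − M⋆ r + M⋆ j)` almost surely. -/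
theorem doob_martingale_surely_optimal
    {Ω : Type*} {mΩ : MeasurableSpace Ω} {μ : Measure Ω} [IsProbabilityMeasure μ]
    (J : ℕ) (ℱ : Filtration ℕ mΩ)
    (Z Y Mstar : ℕ → Ω → ℝ)
    (hZ_adapted : Adapted ℱ Z)
    (hZ_int : ∀ j, Integrable (Z j) μ)
    (hYJ : ∀ ω, Y J ω = Z J ω)
    (hY : ∀ j, j < J → ∀ ω, Y j ω = max (Z j ω) ((μ[Y (j + 1) | ℱ j]) ω))
    (hMstar : ∀ j ω, Mstar j ω =
      ∑ l ∈ Finset.range j, (Y (l + 1) ω - (μ[Y (l + 1) | ℱ l]) ω)) :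
    ∀ j, ∀ hj : j ≤ J, ∀ᵐ ω ∂μ,
      Y j ω = (Finset.Icc j J).sup' (Finset.nonempty_Icc.mpr hj)
        (fun r => Z r ω - Mstar r ω + Mstar j ω) := by
  intro j hj
  refine ae_of_all μ (fun ω => ?_)
  have hZleY : ∀ l, l ≤ J → Z l ω ≤ Y l ω := by
    intro l hl
    rcases lt_or_eq_of_le hl with h | h
    · rw [hY l h ω]; exact le_max_left _ _
    · subst h; rw [hYJ ω]
  have hstep : ∀ l, Y (l + 1) ω - Mstar (l + 1) ω + Mstar l ω = (μ[Y (l + 1) | ℱ l]) ω := by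
    intro l
    rw [hMstar (l + 1) ω, hMstar l ω, Finset.sum_range_succ]; ring
  have hEleY : ∀ l, l < J → (μ[Y (l + 1) | ℱ l]) ω ≤ Y l ω := by
    intro l hl; rw [hY l hl ω]; exact le_max_right _ _
  have hmono : ∀ r, j ≤ r → r ≤ J → Y r ω - Mstar r ω ≤ Y j ω - Mstar j ω := by
    intro r
    induction r with
    | zero =>
      intro h _
      have : j = 0 := Nat.le_zero.mp h
      subst this; exact le_refl _
    | succ n ih =>
      intro hjr hrJ
      rcases Nat.lt_or_ge j (n + 1) with h | h
      · have hjn : j ≤ n := Nat.lt_succ_iff.mp h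
        have hnJ : n < J := hrJ
        have h1 := hstep n
        have h2 := hEleY n hnJ
        have h3 := ih hjn (le_of_lt hnJ)
        linarith
      · have : j = n + 1 := le_antisymm hjr h
        subst this; exact le_refl _
  have hex : ∀ d i, J = i + d →
      ∃ r, i ≤ r ∧ r ≤ J ∧ Z r ω - Mstar r ω + Mstar i ω = Y i ω := by
    intro d
    induction d with
    | zero =>
      intro i hi
      refine ⟨i, le_refl _, by omega, ?_⟩
      have : i = J := by omega
      subst this
      rw [hYJ ω]; ring
    | succ n ih =>
      intro i hi
      have hiJ : i < J := by omega
      by_cases hc : Y i ω = Z i ω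
      · exact ⟨i, le_refl _, le_of_lt hiJ, by rw [hc]; ring⟩
      · have hYi : Y i ω = (μ[Y (i + 1) | ℱ i]) ω := by
          rw [hY i hiJ ω] at hc ⊢
          rcases max_cases (Z i ω) ((μ[Y (i + 1) | ℱ i]) ω) with ⟨h1, h2⟩ | ⟨h1, h2⟩
          · exact absurd h1 hc
          · exact h1
        obtain ⟨r, hr1, hr2, hr3⟩ := ih (i + 1) (by omega)
        refine ⟨r, by omega, hr2, ?_⟩
        have := hstep i
        linarith
  obtain ⟨r, hr1, hr2, hr3⟩ := hex (J - j) j (by omega)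
  apply le_antisymm
  · rw [← hr3]
    exact Finset.le_sup' (fun r => Z r ω - Mstar r ω + Mstar j ω) (Finset.mem_Icc.mpr ⟨hr1, hr2⟩)
  · apply Finset.sup'_le
    intro b hb
    rw [Finset.mem_Icc] at hb
    have h1 := hZleY b hb.2
    have h2 := hmono b hb.1 hb.2
    linarith
end

section
/- (Convexity of the weakly optimal martingales, Proposition 1, part 1.) For every 0 ≤ j ≤ J the set M^{∘,j} is convex: if M and M' are martingales with M_0 = M'_0 = 0 that are both weakly optimal at j, and θ ∈ (0,1), then θM + (1−θ)M' is weakly optimal at j. Consequently M^∘ is convex. -/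
/-!
By weak duality, `Y j ≤ E[max_{j ≤ r ≤ J} (Z r - N r + N j) | ℱ j]` for every martingale `N`.
For `N = θ M + (1 - θ) M'` the pathwise maximum is at most the `θ`-combination of the pathwise
maxima for `M` and `M'` (a maximum of convex combinations is at most the convex combination of
the maxima), so its conditional expectation is at most `θ Y j + (1 - θ) Y j = Y j`.
-/

open MeasureTheory Finset

section SnellEnvelope

variable {Ω : Type*} {mΩ : MeasurableSpace Ω} {μ : Measure Ω}

/-- A martingale `N` is weakly optimal at `j` when the Snell envelope at `j` equals
`μ[pathwiseMax Z N hj | ℱ j]`. -/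
noncomputable def pathwiseMax (Z N : ℕ → Ω → ℝ) {j J : ℕ} (hj : j ≤ J) (ω : Ω) : ℝ :=
  (Icc j J).sup' (nonempty_Icc.mpr hj) fun r => Z r ω - N r ω + N j ω

section pathwiseMax

variable {j J : ℕ}

lemma pathwiseMax_self (Z N : ℕ → Ω → ℝ) (J : ℕ) : pathwiseMax Z N (le_refl J) = Z J := by
  funext ω
  simp [pathwiseMax]

lemma pathwiseMax_eq_max (Z N : ℕ → Ω → ℝ) (h : j < J) (ω : Ω) :
    pathwiseMax Z N h.le ω
      = max (Z j ω) (pathwiseMax Z N (h : j + 1 ≤ J) ω + (N j ω - N (j + 1) ω)) := by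
  simp only [pathwiseMax, Finset.sup'_add]
  rw [Finset.sup'_congr _ (insert_Icc_add_one_left_eq_Icc h.le).symm fun _ _ => rfl,
    Finset.sup'_insert]
  congr 1
  · ring
  · exact Finset.sup'_congr _ rfl fun r _ => by ring
  · exact nonempty_Icc.mpr h

lemma integrable_pathwiseMax {Z N : ℕ → Ω → ℝ} (hZ : ∀ r, Integrable (Z r) μ)
    (hN : ∀ r, Integrable (N r) μ) (hj : j ≤ J) : Integrable (pathwiseMax Z N hj) μ := by
  have : pathwiseMax Z N hj =
      (Icc j J).sup' (nonempty_Icc.mpr hj) fun r => Z r - N r + N j := by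
    funext ω
    simp [pathwiseMax, Finset.sup'_apply]
  rw [this]
  exact Finset.sup'_induction (p := fun g => Integrable g μ) _ _ (fun _ hf _ hg => hf.sup hg)
    fun r _ => ((hZ r).sub (hN r)).add (hN j)

lemma pathwiseMax_convex_le (Z M M' : ℕ → Ω → ℝ) {θ : ℝ} (hθ₀ : 0 ≤ θ) (hθ₁ : θ ≤ 1)
    (hj : j ≤ J) :
    pathwiseMax Z (θ • M + (1 - θ) • M') hj
      ≤ θ • pathwiseMax Z M hj + (1 - θ) • pathwiseMax Z M' hj := by
  intro ω
  refine Finset.sup'_le _ _ fun r hr => ?_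
  have hM := Finset.le_sup' (fun r => Z r ω - M r ω + M j ω) hr
  have hM' := Finset.le_sup' (fun r => Z r ω - M' r ω + M' j ω) hr
  calc Z r ω - (θ • M + (1 - θ) • M') r ω + (θ • M + (1 - θ) • M') j ω
      = θ * (Z r ω - M r ω + M j ω) + (1 - θ) * (Z r ω - M' r ω + M' j ω) := by
        simp only [Pi.add_apply, Pi.smul_apply, smul_eq_mul]; ring
    _ ≤ θ * pathwiseMax Z M hj ω + (1 - θ) * pathwiseMax Z M' hj ω := by
        have : 0 ≤ 1 - θ := by linarith
        gcongr
        exacts [hM, hM']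

lemma condExp_pathwiseMax_convex_ae_le {ℱ : Filtration ℕ mΩ} {Z M M' : ℕ → Ω → ℝ} {Y : Ω → ℝ}
    (hZ : ∀ r, Integrable (Z r) μ) (hM : ∀ r, Integrable (M r) μ)
    (hM' : ∀ r, Integrable (M' r) μ) {θ : ℝ} (hθ₀ : 0 ≤ θ) (hθ₁ : θ ≤ 1) (hj : j ≤ J)
    (hopt : Y =ᵐ[μ] μ[pathwiseMax Z M hj | ℱ j])
    (hopt' : Y =ᵐ[μ] μ[pathwiseMax Z M' hj | ℱ j]) :
    μ[pathwiseMax Z (θ • M + (1 - θ) • M') hj | ℱ j] ≤ᵐ[μ] Y := by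
  have hP := integrable_pathwiseMax hZ hM hj
  have hP' := integrable_pathwiseMax hZ hM' hj
  have hN r : Integrable ((θ • M + (1 - θ) • M') r) μ :=
    ((hM r).smul θ).add ((hM' r).smul (1 - θ))
  calc μ[pathwiseMax Z (θ • M + (1 - θ) • M') hj | ℱ j]
      ≤ᵐ[μ] μ[θ • pathwiseMax Z M hj + (1 - θ) • pathwiseMax Z M' hj | ℱ j] :=
        condExp_mono (integrable_pathwiseMax hZ hN hj) ((hP.smul θ).add (hP'.smul (1 - θ)))
          (Filter.Eventually.of_forall (pathwiseMax_convex_le Z M M' hθ₀ hθ₁ hj))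
    _ =ᵐ[μ] θ • μ[pathwiseMax Z M hj | ℱ j] + (1 - θ) • μ[pathwiseMax Z M' hj | ℱ j] :=
        (condExp_add (hP.smul θ) (hP'.smul (1 - θ)) _).trans
          ((condExp_smul θ _ _).add (condExp_smul (1 - θ) _ _))
    _ =ᵐ[μ] θ • Y + (1 - θ) • Y := (hopt.symm.const_smul θ).add (hopt'.symm.const_smul _)
    _ = Y := by rw [← add_smul, add_sub_cancel, one_smul]

end pathwiseMax

lemma MeasureTheory.Martingale.condExp_add_sub_ae_eq [IsFiniteMeasure μ] {ℱ : Filtration ℕ mΩ}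
    {N : ℕ → Ω → ℝ} (hN : Martingale N ℱ μ) {f : Ω → ℝ} (hf : Integrable f μ) {i k : ℕ}
    (hik : i ≤ k) : μ[f + (N i - N k) | ℱ i] =ᵐ[μ] μ[f | ℱ i] := by
  have hNi : μ[N i | ℱ i] = N i :=
    condExp_of_stronglyMeasurable (ℱ.le i) (hN.stronglyMeasurable i) (hN.integrable i)
  filter_upwards [condExp_add hf ((hN.integrable i).sub (hN.integrable k)) (ℱ i),
    condExp_sub (hN.integrable i) (hN.integrable k) (ℱ i), hN.condExp_ae_eq hik]
    with ω hadd hsub hmart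
  simp only [Pi.add_apply, Pi.sub_apply] at hadd hsub ⊢
  rw [hadd, hsub, hNi, hmart, sub_self, add_zero]

structure IsSnellEnvelope (μ : Measure Ω) (ℱ : Filtration ℕ mΩ) (J : ℕ) (Z Y : ℕ → Ω → ℝ) :
    Prop where
  terminal : ∀ ω, Y J ω = Z J ω
  step : ∀ j < J, ∀ ω, Y j ω = max (Z j ω) (μ[Y (j + 1) | ℱ j] ω)

namespace IsSnellEnvelope

variable {ℱ : Filtration ℕ mΩ} {J : ℕ} {Z Y : ℕ → Ω → ℝ}

lemma integrable (hY : IsSnellEnvelope μ ℱ J Z Y) (hZ : ∀ j, Integrable (Z j) μ) {j : ℕ}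
    (hj : j ≤ J) : Integrable (Y j) μ := by
  rcases hj.lt_or_eq with h | rfl
  · rw [funext (hY.step j h)]
    exact (hZ j).sup integrable_condExp
  · rw [funext hY.terminal]
    exact hZ j

/-- Weak duality (Rogers; Haugh–Kogan). -/
lemma ae_le_condExp_pathwiseMax [IsFiniteMeasure μ] (hY : IsSnellEnvelope μ ℱ J Z Y)
    (hZ_adapted : Adapted ℱ Z) (hZ : ∀ j, Integrable (Z j) μ) {N : ℕ → Ω → ℝ}
    (hN : Martingale N ℱ μ) {j : ℕ} (hj : j ≤ J) :
    Y j ≤ᵐ[μ] μ[pathwiseMax Z N hj | ℱ j] := by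
  have hZ_condExp (k : ℕ) : μ[Z k | ℱ k] = Z k :=
    condExp_of_stronglyMeasurable (ℱ.le k) (hZ_adapted k).stronglyMeasurable (hZ k)
  induction hj using Nat.decreasingInduction with
  | self =>
    rw [pathwiseMax_self, hZ_condExp]
    exact Filter.Eventually.of_forall fun ω => (hY.terminal ω).le
  | of_succ k hk ih =>
    have hP := integrable_pathwiseMax hZ hN.integrable hk.le
    have hP' := integrable_pathwiseMax hZ hN.integrable (hk : k + 1 ≤ J)
    have hP'_shift := hP'.add ((hN.integrable k).sub (hN.integrable (k + 1)))
    have hZ_le : Z k ≤ᵐ[μ] μ[pathwiseMax Z N hk.le | ℱ k] := by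
      rw [← hZ_condExp k]
      exact condExp_mono (hZ k) hP <| Filter.Eventually.of_forall fun ω => by
        rw [pathwiseMax_eq_max Z N hk]; exact le_max_left _ _
    have hcont_le : μ[Y (k + 1) | ℱ k] ≤ᵐ[μ] μ[pathwiseMax Z N hk.le | ℱ k] :=
      calc μ[Y (k + 1) | ℱ k]
          ≤ᵐ[μ] μ[μ[pathwiseMax Z N (hk : k + 1 ≤ J) | ℱ (k + 1)] | ℱ k] :=
            condExp_mono (hY.integrable hZ hk) integrable_condExp ih
        _ =ᵐ[μ] μ[pathwiseMax Z N (hk : k + 1 ≤ J) | ℱ k] :=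
            condExp_condExp_of_le (ℱ.mono k.le_succ) (ℱ.le (k + 1))
        _ =ᵐ[μ] μ[pathwiseMax Z N (hk : k + 1 ≤ J) + (N k - N (k + 1)) | ℱ k] :=
            (hN.condExp_add_sub_ae_eq hP' k.le_succ).symm
        _ ≤ᵐ[μ] μ[pathwiseMax Z N hk.le | ℱ k] :=
            condExp_mono hP'_shift hP <| Filter.Eventually.of_forall fun ω => by
              rw [pathwiseMax_eq_max Z N hk]; exact le_max_right _ _
    filter_upwards [hZ_le, hcont_le] with ω hZω hcontω
    rw [hY.step k hk ω]
    exact max_le hZω hcontω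

end IsSnellEnvelope

end SnellEnvelope

theorem weakly_optimal_convex_general
    {Ω : Type*} {mΩ : MeasurableSpace Ω} {μ : Measure Ω} [IsProbabilityMeasure μ]
    (J : ℕ) (ℱ : Filtration ℕ mΩ)
    (Z Y : ℕ → Ω → ℝ)
    (hZ_adapted : Adapted ℱ Z)
    (hZ_int : ∀ j, Integrable (Z j) μ)
    (hYJ : ∀ ω, Y J ω = Z J ω)
    (hY : ∀ j, j < J → ∀ ω, Y j ω = max (Z j ω) ((μ[Y (j + 1) | ℱ j]) ω))
    (M M' : ℕ → Ω → ℝ)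
    (hM : Martingale M ℱ μ) (hM' : Martingale M' ℱ μ)
    (θ : ℝ) (hθ : θ ∈ Set.Ioo (0 : ℝ) 1)
    (j : ℕ) (hj : j ≤ J)
    (hopt : Y j =ᵐ[μ] μ[fun ω => (Finset.Icc j J).sup' (Finset.nonempty_Icc.mpr hj)
        (fun r => Z r ω - M r ω + M j ω) | ℱ j])
    (hopt' : Y j =ᵐ[μ] μ[fun ω => (Finset.Icc j J).sup' (Finset.nonempty_Icc.mpr hj)
        (fun r => Z r ω - M' r ω + M' j ω) | ℱ j]) :
    Y j =ᵐ[μ] μ[fun ω => (Finset.Icc j J).sup' (Finset.nonempty_Icc.mpr hj)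
        (fun r => Z r ω - (θ * M r ω + (1 - θ) * M' r ω)
          + (θ * M j ω + (1 - θ) * M' j ω)) | ℱ j] := by
  change Y j =ᵐ[μ] μ[pathwiseMax Z (θ • M + (1 - θ) • M') hj | ℱ j]
  exact (IsSnellEnvelope.ae_le_condExp_pathwiseMax ⟨hYJ, hY⟩ hZ_adapted hZ_int
    ((hM.smul θ).add (hM'.smul (1 - θ))) hj).antisymm
    (condExp_pathwiseMax_convex_ae_le hZ_int hM.integrable hM'.integrable hθ.1.le hθ.2.le hj
      hopt hopt')

/-- **Convexity of the weakly optimal martingales (Proposition 1, part 1).**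
For every `0 ≤ j ≤ J`: if `M` and `M'` are martingales with `M 0 = M' 0 = 0` that are both
weakly optimal at `j`, and `θ ∈ (0,1)`, then `θ•M + (1−θ)•M'` is weakly optimal at `j`.
(Consequently the sets `M^{∘,j}` and `M^∘` are convex.) -/
theorem weakly_optimal_convex
    {Ω : Type*} {mΩ : MeasurableSpace Ω} {μ : Measure Ω} [IsProbabilityMeasure μ]
    (J : ℕ) (ℱ : Filtration ℕ mΩ)
    (Z Y : ℕ → Ω → ℝ)
    (hZ_adapted : Adapted ℱ Z)
    (hZ_int : ∀ j, Integrable (Z j) μ)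
    (hYJ : ∀ ω, Y J ω = Z J ω)
    (hY : ∀ j, j < J → ∀ ω, Y j ω = max (Z j ω) ((μ[Y (j + 1) | ℱ j]) ω))
    (M M' : ℕ → Ω → ℝ)
    (hM : Martingale M ℱ μ) (hM' : Martingale M' ℱ μ)
    (hM0 : ∀ ω, M 0 ω = 0) (hM'0 : ∀ ω, M' 0 ω = 0)
    (θ : ℝ) (hθ : θ ∈ Set.Ioo (0 : ℝ) 1)
    (j : ℕ) (hj : j ≤ J)
    (hopt : Y j =ᵐ[μ] μ[fun ω => (Finset.Icc j J).sup' (Finset.nonempty_Icc.mpr hj)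
        (fun r => Z r ω - M r ω + M j ω) | ℱ j])
    (hopt' : Y j =ᵐ[μ] μ[fun ω => (Finset.Icc j J).sup' (Finset.nonempty_Icc.mpr hj)
        (fun r => Z r ω - M' r ω + M' j ω) | ℱ j]) :
    Y j =ᵐ[μ] μ[fun ω => (Finset.Icc j J).sup' (Finset.nonempty_Icc.mpr hj)
        (fun r => Z r ω - (θ * M r ω + (1 - θ) * M' r ω)
          + (θ * M j ω + (1 - θ) * M' j ω)) | ℱ j] :=
  weakly_optimal_convex_general J ℱ Z Y hZ_adapted hZ_int hYJ hY M M' hM hM' θ hθ j hj hopt hopt'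
end

section
/- (Convexity of the surely optimal martingales, Proposition 1, part 2.) For every 0 ≤ j ≤ J the set M^{∘∘,j} is convex: if M and M' are martingales with M_0 = M'_0 = 0 that are both surely optimal at j, and θ ∈ (0,1), then θM + (1−θ)M' is surely optimal at j. Consequently M^∘∘ is convex. -/
/-!
Put `N = θ M + (1 - θ) M'`. Pathwise, the maximum `max_r (Z_r - N_r + N_j)` is convex in the
martingale, so it is at most `θ Y*_j + (1 - θ) Y*_j = Y*_j` almost surely. Conversely, for any
martingale `N` the process `Y* - N` is (a.s.) the Snell envelope of `Z - N`, and a Snell envelope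
is bounded by the conditional expectation of the running maximum, so
`Y*_j ≤ E[max_r (Z_r - N_r + N_j) | F_j]`. A random variable lying below `Y*_j` whose conditional
expectation lies above it must coincide with `Y*_j` almost surely.
-/

open MeasureTheory Finset

theorem Finset.sup'_convexCombination_le {ι : Type*} {s : Finset ι} (hs : s.Nonempty)
    (f g : ι → ℝ) {θ : ℝ} (hθ₀ : 0 ≤ θ) (hθ₁ : θ ≤ 1) :
    s.sup' hs (fun i => θ * f i + (1 - θ) * g i) ≤ θ * s.sup' hs f + (1 - θ) * s.sup' hs g :=
  sup'_le hs _ fun _ hi => add_le_add (mul_le_mul_of_nonneg_left (le_sup' f hi) hθ₀)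
    (mul_le_mul_of_nonneg_left (le_sup' g hi) (sub_nonneg.mpr hθ₁))

namespace MeasureTheory

variable {Ω : Type*} {mΩ : MeasurableSpace Ω} {μ : Measure Ω}

theorem Integrable.finset_sup' {ι : Type*} {s : Finset ι} (hs : s.Nonempty) {F : ι → Ω → ℝ}
    (hF : ∀ i ∈ s, Integrable (F i) μ) : Integrable (fun ω => s.sup' hs (F · ω)) μ := by
  induction hs using Finset.Nonempty.cons_induction with
  | singleton i => simpa using hF i (mem_singleton_self i)
  | cons i s _ hs ih =>
    simp only [sup'_cons hs]
    exact (hF i (mem_cons_self i s)).sup (ih fun k hk => hF k (mem_cons_of_mem hk))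

theorem ae_eq_of_ae_le_of_le_condExp {m : MeasurableSpace Ω} (hm : m ≤ mΩ)
    [SigmaFinite (μ.trim hm)] {f g : Ω → ℝ} (hf : Integrable f μ) (hg : Integrable g μ)
    (hgf : g ≤ᵐ[μ] f) (hfg : f ≤ᵐ[μ] μ[g | m]) : f =ᵐ[μ] g := by
  refine ((integral_eq_iff_of_ae_le hg hf hgf).mp
    (le_antisymm (integral_mono_ae hg hf hgf) ?_)).symm
  calc ∫ ω, f ω ∂μ ≤ ∫ ω, μ[g | m] ω ∂μ := integral_mono_ae hf integrable_condExp hfg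
    _ = ∫ ω, g ω ∂μ := integral_condExp hm

section SnellEnvelope

variable {ℱ : Filtration ℕ mΩ} {J : ℕ}

theorem integrable_of_snellEnvelope {Z Y : ℕ → Ω → ℝ} (hZ_int : ∀ r, Integrable (Z r) μ)
    (hYJ : ∀ ω, Y J ω = Z J ω)
    (hY : ∀ r < J, ∀ ω, Y r ω = max (Z r ω) (μ[Y (r + 1) | ℱ r] ω)) {r : ℕ} (hr : r ≤ J) :
    Integrable (Y r) μ := by
  rcases hr.lt_or_eq with hr | rfl
  · rw [show Y r = fun ω => max (Z r ω) (μ[Y (r + 1) | ℱ r] ω) from funext (hY r hr)]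
    exact (hZ_int r).sup integrable_condExp
  · exact (hZ_int r).congr (.of_forall fun ω => (hYJ ω).symm)

variable [SigmaFiniteFiltration μ ℱ]

theorem le_condExp_sup'_of_le_max_condExp {X U : ℕ → Ω → ℝ} (hX_adapted : StronglyAdapted ℱ X)
    (hX_int : ∀ r, Integrable (X r) μ) (hU_int : ∀ r ≤ J, Integrable (U r) μ)
    (hUJ : U J ≤ᵐ[μ] X J)
    (hU : ∀ r < J, U r ≤ᵐ[μ] fun ω => max (X r ω) (μ[U (r + 1) | ℱ r] ω))
    {r : ℕ} (hr : r ≤ J) :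
    U r ≤ᵐ[μ] μ[fun ω => (Icc r J).sup' (nonempty_Icc.mpr hr) (X · ω) | ℱ r] := by
  induction hr using Nat.decreasingInduction with
  | self =>
    have hsup : (fun ω => (Icc J J).sup' (nonempty_Icc.mpr le_rfl) (X · ω)) = X J := by
      ext ω; simp
    rwa [hsup, condExp_of_stronglyMeasurable (ℱ.le J) (hX_adapted J) (hX_int J)]
  | of_succ r hr ih =>
    set T := fun ω => (Icc r J).sup' (nonempty_Icc.mpr hr.le) (X · ω)
    set T' := fun ω => (Icc (r + 1) J).sup' (nonempty_Icc.mpr hr) (X · ω)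
    have hT_int : Integrable T μ := Integrable.finset_sup' _ fun s _ => hX_int s
    have hT'_int : Integrable T' μ := Integrable.finset_sup' _ fun s _ => hX_int s
    have hXT : X r ≤ᵐ[μ] μ[T | ℱ r] := by
      rw [← condExp_of_stronglyMeasurable (ℱ.le r) (hX_adapted r) (hX_int r)]
      exact condExp_mono (hX_int r) hT_int
        (.of_forall fun ω => le_sup' (X · ω) (left_mem_Icc.mpr hr.le))
    have hUT : μ[U (r + 1) | ℱ r] ≤ᵐ[μ] μ[T | ℱ r] := calc
      μ[U (r + 1) | ℱ r] ≤ᵐ[μ] μ[μ[T' | ℱ (r + 1)] | ℱ r] :=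
        condExp_mono (hU_int _ hr) integrable_condExp ih
      _ =ᵐ[μ] μ[T' | ℱ r] := condExp_condExp_of_le (ℱ.mono r.le_succ) (ℱ.le (r + 1))
      _ ≤ᵐ[μ] μ[T | ℱ r] := condExp_mono hT'_int hT_int <| .of_forall fun ω =>
        sup'_mono _ (Icc_subset_Icc_left r.le_succ) _
    filter_upwards [hU r hr, hXT, hUT] with ω hU hXT hUT
    exact hU.trans (max_le hXT hUT)

theorem snellEnvelope_le_condExp_sup'_sub_add {Z Y N : ℕ → Ω → ℝ} (hZ_adapted : Adapted ℱ Z)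
    (hZ_int : ∀ r, Integrable (Z r) μ) (hYJ : ∀ ω, Y J ω = Z J ω)
    (hY : ∀ r < J, ∀ ω, Y r ω = max (Z r ω) (μ[Y (r + 1) | ℱ r] ω))
    (hN : Martingale N ℱ μ) {r : ℕ} (hr : r ≤ J) :
    Y r ≤ᵐ[μ] μ[fun ω => (Icc r J).sup' (nonempty_Icc.mpr hr) (fun s => Z s ω - N s ω + N r ω)
      | ℱ r] := by
  have hY_int : ∀ r ≤ J, Integrable (Y r) μ := fun r => integrable_of_snellEnvelope hZ_int hYJ hY
  have hYN : ∀ r < J, (Y - N) r ≤ᵐ[μ]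
      fun ω => max ((Z - N) r ω) (μ[(Y - N) (r + 1) | ℱ r] ω) := by
    intro r hr
    filter_upwards [condExp_sub (hY_int _ hr) (hN.integrable (r + 1)) (ℱ r),
      hN.condExp_ae_eq r.le_succ] with ω hsub hmart
    simp only [Pi.sub_apply, hsub, hmart, hY r hr ω, max_sub_sub_right, le_rfl]
  have hle := le_condExp_sup'_of_le_max_condExp
    (fun s => ((hZ_adapted s).stronglyMeasurable.sub (hN.stronglyAdapted s)))
    (fun s => (hZ_int s).sub (hN.integrable s))
    (fun s hs => (hY_int s hs).sub (hN.integrable s))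
    (.of_forall fun ω => by simp [hYJ ω]) hYN hr
  have hT_int : Integrable (fun ω => (Icc r J).sup' (nonempty_Icc.mpr hr) ((Z - N) · ω)) μ :=
    Integrable.finset_sup' _ fun s _ => (hZ_int s).sub (hN.integrable s)
  have hshift : (fun ω => (Icc r J).sup' (nonempty_Icc.mpr hr) (fun s => Z s ω - N s ω + N r ω))
      = (fun ω => (Icc r J).sup' (nonempty_Icc.mpr hr) ((Z - N) · ω)) + N r := by
    ext ω
    simp only [Pi.add_apply, Pi.sub_apply, sup'_add]
  rw [hshift]
  filter_upwards [hle, condExp_add hT_int (hN.integrable r) (ℱ r)] with ω hle hadd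
  rw [hadd, Pi.add_apply, condExp_of_stronglyMeasurable (ℱ.le r) (hN.stronglyAdapted r)
    (hN.integrable r), ← sub_le_iff_le_add]
  exact hle

end SnellEnvelope

end MeasureTheory

theorem surely_optimal_convex_general
    {Ω : Type*} {mΩ : MeasurableSpace Ω} {μ : Measure Ω} [IsProbabilityMeasure μ]
    (J : ℕ) (ℱ : Filtration ℕ mΩ)
    (Z Y : ℕ → Ω → ℝ)
    (hZ_adapted : Adapted ℱ Z)
    (hZ_int : ∀ j, Integrable (Z j) μ)
    (hYJ : ∀ ω, Y J ω = Z J ω)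
    (hY : ∀ j, j < J → ∀ ω, Y j ω = max (Z j ω) ((μ[Y (j + 1) | ℱ j]) ω))
    (M M' : ℕ → Ω → ℝ)
    (hM : Martingale M ℱ μ) (hM' : Martingale M' ℱ μ)
    (θ : ℝ) (hθ : θ ∈ Set.Ioo (0 : ℝ) 1)
    (j : ℕ) (hj : j ≤ J)
    (hopt : ∀ᵐ ω ∂μ, Y j ω = (Finset.Icc j J).sup' (Finset.nonempty_Icc.mpr hj)
        (fun r => Z r ω - M r ω + M j ω))
    (hopt' : ∀ᵐ ω ∂μ, Y j ω = (Finset.Icc j J).sup' (Finset.nonempty_Icc.mpr hj)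
        (fun r => Z r ω - M' r ω + M' j ω)) :
    ∀ᵐ ω ∂μ, Y j ω = (Finset.Icc j J).sup' (Finset.nonempty_Icc.mpr hj)
        (fun r => Z r ω - (θ * M r ω + (1 - θ) * M' r ω)
          + (θ * M j ω + (1 - θ) * M' j ω)) := by
  obtain ⟨hθ₀, hθ₁⟩ := hθ
  set N : ℕ → Ω → ℝ := fun k ω => θ * M k ω + (1 - θ) * M' k ω
  have hN : Martingale N ℱ μ := (hM.smul θ).add (hM'.smul (1 - θ))
  set S : Ω → ℝ := fun ω =>
    (Icc j J).sup' (nonempty_Icc.mpr hj) (fun r => Z r ω - N r ω + N j ω)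
  have hS_le : S ≤ᵐ[μ] Y j := by
    filter_upwards [hopt, hopt'] with ω h h'
    have hconv := sup'_convexCombination_le (nonempty_Icc.mpr hj)
      (fun r => Z r ω - M r ω + M j ω) (fun r => Z r ω - M' r ω + M' j ω) hθ₀.le hθ₁.le
    rw [← h, ← h'] at hconv
    calc S ω = (Icc j J).sup' (nonempty_Icc.mpr hj)
          (fun r => θ * (Z r ω - M r ω + M j ω) + (1 - θ) * (Z r ω - M' r ω + M' j ω)) :=
          sup'_congr _ rfl fun r _ => by ring
      _ ≤ θ * Y j ω + (1 - θ) * Y j ω := hconv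
      _ = Y j ω := by ring
  have hS_int : Integrable S μ :=
    Integrable.finset_sup' _ fun r _ => ((hZ_int r).sub (hN.integrable r)).add (hN.integrable j)
  exact ae_eq_of_ae_le_of_le_condExp (ℱ.le j) (integrable_of_snellEnvelope hZ_int hYJ hY hj)
    hS_int hS_le (snellEnvelope_le_condExp_sup'_sub_add hZ_adapted hZ_int hYJ hY hN hj)

/-- **Convexity of the surely optimal martingales (Proposition 1, part 2).**
For every `0 ≤ j ≤ J`: if `M` and `M'` are martingales with `M 0 = M' 0 = 0` that are both
surely optimal at `j`, and `θ ∈ (0,1)`, then `θ•M + (1−θ)•M'` is surely optimal at `j`.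
(Consequently the sets `M^{∘∘,j}` and `M^∘∘` are convex.) -/
theorem surely_optimal_convex
    {Ω : Type*} {mΩ : MeasurableSpace Ω} {μ : Measure Ω} [IsProbabilityMeasure μ]
    (J : ℕ) (ℱ : Filtration ℕ mΩ)
    (Z Y : ℕ → Ω → ℝ)
    (hZ_adapted : Adapted ℱ Z)
    (hZ_int : ∀ j, Integrable (Z j) μ)
    (hYJ : ∀ ω, Y J ω = Z J ω)
    (hY : ∀ j, j < J → ∀ ω, Y j ω = max (Z j ω) ((μ[Y (j + 1) | ℱ j]) ω))
    (M M' : ℕ → Ω → ℝ)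
    (hM : Martingale M ℱ μ) (hM' : Martingale M' ℱ μ)
    (hM0 : ∀ ω, M 0 ω = 0) (hM'0 : ∀ ω, M' 0 ω = 0)
    (θ : ℝ) (hθ : θ ∈ Set.Ioo (0 : ℝ) 1)
    (j : ℕ) (hj : j ≤ J)
    (hopt : ∀ᵐ ω ∂μ, Y j ω = (Finset.Icc j J).sup' (Finset.nonempty_Icc.mpr hj)
        (fun r => Z r ω - M r ω + M j ω))
    (hopt' : ∀ᵐ ω ∂μ, Y j ω = (Finset.Icc j J).sup' (Finset.nonempty_Icc.mpr hj)
        (fun r => Z r ω - M' r ω + M' j ω)) :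
    ∀ᵐ ω ∂μ, Y j ω = (Finset.Icc j J).sup' (Finset.nonempty_Icc.mpr hj)
        (fun r => Z r ω - (θ * M r ω + (1 - θ) * M' r ω)
          + (θ * M j ω + (1 - θ) * M' j ω)) :=
  surely_optimal_convex_general J ℱ Z Y hZ_adapted hZ_int hYJ hY M M' hM hM' θ hθ j hj hopt hopt'
end

section
/- (Lemma 1: structural identities for M^∘.) A process M belongs to M^∘ if and only if M is an adapted martingale with M_0 = 0 such that almost surely: (i) max_{τ^{l−1} < r ≤ τ^l} (Z_r − M_r) = Z_{τ^l} − M_{τ^l} for every l ≥ 1, and (ii) max_{τ^{l−1} ≤ r ≤ τ^l} (Z_r − M_r) = Z_{τ^{l−1}} − M_{τ^{l−1}} for every l > 1. -/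
/-!
Let `σ_j` be the first date in `[j, J]` with `Z ≥ C` (`exerciseTime`). Backward induction gives
`Y_j − M_j = E[Z_{σ_j} − M_{σ_j} | ℱ_j]` for every martingale `M`, and `Z_{σ_j} − M_{σ_j}` never
exceeds `max_{j ≤ r ≤ J} (Z_r − M_r)`. A nonnegative variable with zero conditional mean vanishes,
so weak optimality at `j` holds iff this maximum is attained at `σ_j` almost surely.
Pathwise, `σ_j = τ^l` for `τ^{l−1} < j ≤ τ^l`, so optimality at every date says that `Z − M`
attains its maximum over `(τ^{l−1}, J]` at `τ^l` for every `l`. By backward induction on `l` this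
is equivalent to (i) and (ii): (i) handles `(τ^{l−1}, τ^l]`, and (ii) carries the maximum over
`(τ^l, J]`, attained at `τ^{l+1}`, back to `τ^l`.
-/

open MeasureTheory Finset

/-- The discrete interval `{r : ℕ | τ^{l−1} < r ≤ τ^l} ∩ {0,…,J}` (the family `τ^l` of
successive optimal exercise dates is `ℤ`-valued, with the convention `τ^0 = −1`). -/
def itvIoc {Ω : Type*} (J : ℕ) (τ : ℕ → Ω → ℤ) (l : ℕ) (ω : Ω) : Finset ℕ :=
  (Finset.Icc 0 J).filter (fun r => τ (l - 1) ω < (r : ℤ) ∧ (r : ℤ) ≤ τ l ω)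

/-- The discrete interval `{r : ℕ | τ^{l−1} ≤ r ≤ τ^l} ∩ {0,…,J}`. -/
def itvIcc {Ω : Type*} (J : ℕ) (τ : ℕ → Ω → ℤ) (l : ℕ) (ω : Ω) : Finset ℕ :=
  (Finset.Icc 0 J).filter (fun r => τ (l - 1) ω ≤ (r : ℤ) ∧ (r : ℤ) ≤ τ l ω)

lemma Finset.forall_sup'_eq_apply_iff {α β : Type*} [SemilatticeSup β] {s : Finset α}
    {f : α → β} {a : α} (ha : a ∈ s) :
    (∀ hs : s.Nonempty, s.sup' hs f = f a) ↔ ∀ r ∈ s, f r ≤ f a :=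
  ⟨fun h => (Finset.sup'_le_iff ⟨a, ha⟩ f).1 (h ⟨a, ha⟩).le,
    fun h _ => le_antisymm (Finset.sup'_le _ _ h) (Finset.le_sup' f ha)⟩

namespace MeasureTheory

lemma integrable_finset_sup' {Ω ι : Type*} {mΩ : MeasurableSpace Ω} {μ : Measure Ω}
    {s : Finset ι} (hs : s.Nonempty) {f : ι → Ω → ℝ} (hf : ∀ i ∈ s, Integrable (f i) μ) :
    Integrable (fun ω => s.sup' hs fun i => f i ω) μ := by
  refine (Finset.sup'_induction hs f (p := fun g => Integrable g μ)
    (fun _ h₁ _ h₂ => h₁.sup h₂) hf).congr (.of_forall fun ω => ?_)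
  exact Finset.sup'_apply hs f ω

section CondExp

variable {Ω : Type*} {m m₀ : MeasurableSpace Ω} {μ : Measure Ω}

lemma condExp_ae_eq_condExp_iff_of_ae_le (hm : m ≤ m₀) [SigmaFinite (μ.trim hm)]
    {f g : Ω → ℝ} (hf : Integrable f μ) (hg : Integrable g μ) (hfg : f ≤ᵐ[μ] g) :
    μ[f | m] =ᵐ[μ] μ[g | m] ↔ f =ᵐ[μ] g := by
  refine ⟨fun h => (integral_eq_iff_of_ae_le hf hg hfg).1 ?_, condExp_congr_ae⟩
  rw [← integral_condExp hm, ← integral_condExp hm (f := g)]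
  exact integral_congr_ae h

lemma condExp_indicator_add_indicator_compl (hm : m ≤ m₀) [SigmaFinite (μ.trim hm)]
    {s : Set Ω} (hs : MeasurableSet[m] s) {f g : Ω → ℝ} (hf : StronglyMeasurable[m] f)
    (hfi : Integrable f μ) (hgi : Integrable g μ) :
    μ[s.indicator f + sᶜ.indicator g | m] =ᵐ[μ] s.indicator f + sᶜ.indicator (μ[g | m]) := by
  have hs₀ : MeasurableSet[m₀] s := hm s hs
  filter_upwards [condExp_add (hfi.indicator hs₀) (hgi.indicator hs₀.compl) m,
    condExp_indicator hgi hs.compl] with ω hadd hind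
  rw [hadd, Pi.add_apply, hind,
    condExp_of_stronglyMeasurable hm (hf.indicator hs) (hfi.indicator hs₀), Pi.add_apply]

end CondExp

section HittingTime

variable {Ω β : Type*} {u : ℕ → Ω → β} {s : Set β} {n m t : ℕ} {ω : Ω}

lemma hittingBtwn_eq_of_forall_notMem (hnt : n ≤ t) (htm : t ≤ m) (ht : u t ω ∈ s)
    (hbefore : ∀ i, n ≤ i → i < t → u i ω ∉ s) : hittingBtwn u s n m ω = t := by
  refine le_antisymm (hittingBtwn_le_of_mem hnt htm ht) (not_lt.1 fun hlt => ?_)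
  obtain ⟨i, ⟨hni, hit⟩, hi⟩ := (hittingBtwn_lt_iff t htm).1 hlt
  exact hbefore i hni hit hi

lemma hittingBtwn_eq_hittingBtwn_succ_of_notMem (hn : u n ω ∉ s) :
    hittingBtwn u s n m ω = hittingBtwn u s (n + 1) m ω := by
  refine le_antisymm (hittingBtwn_mono_left u s m n.le_succ ω) ?_
  rcases (hittingBtwn_le (u := u) (s := s) (n := n) (m := m) ω).lt_or_eq with hlt | heq
  · have hnm : n ≤ m := by
      by_contra! hmn
      exact hlt.ne (hittingBtwn_of_le hmn.le)
    have hmem := hittingBtwn_mem_set_of_hittingBtwn_lt hlt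
    have hne : hittingBtwn u s n m ω ≠ n := fun h => hn (h ▸ hmem)
    exact hittingBtwn_le_of_mem (by have := le_hittingBtwn (u := u) (s := s) hnm ω; omega)
      hlt.le hmem
  · rw [heq]
    exact hittingBtwn_le ω

end HittingTime

section OptimalStopping

variable {Ω : Type*} {mΩ : MeasurableSpace Ω} {μ : Measure Ω} {J j t : ℕ} {ω : Ω}
  {ℱ : Filtration ℕ mΩ} {Z Y C M : ℕ → Ω → ℝ}

noncomputable def exerciseTime (Z C : ℕ → Ω → ℝ) (J j : ℕ) : Ω → ℕ :=
  hittingBtwn (Z - C) (Set.Ici 0) j J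

lemma exerciseTime_mem_Icc (hj : j ≤ J) (ω : Ω) : exerciseTime Z C J j ω ∈ Set.Icc j J :=
  hittingBtwn_mem_Icc hj ω

lemma exerciseTime_eq (hjt : j ≤ t) (htJ : t ≤ J) (ht : C t ω ≤ Z t ω)
    (hbefore : ∀ i, j ≤ i → i < t → Z i ω < C i ω) : exerciseTime Z C J j ω = t :=
  hittingBtwn_eq_of_forall_notMem hjt htJ (by simpa using ht)
    fun i hji hit => by simpa using hbefore i hji hit

lemma exerciseTime_of_le (hj : j ≤ J) (h : C j ω ≤ Z j ω) : exerciseTime Z C J j ω = j :=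
  exerciseTime_eq le_rfl hj h fun _ hji hij => absurd hij (not_lt.2 hji)

lemma exerciseTime_of_lt (h : Z j ω < C j ω) :
    exerciseTime Z C J j ω = exerciseTime Z C J (j + 1) ω :=
  hittingBtwn_eq_hittingBtwn_succ_of_notMem (by simpa using h)

lemma exerciseTime_self (ω : Ω) : exerciseTime Z C J J ω = J := by
  simpa using exerciseTime_mem_Icc (Z := Z) (C := C) le_rfl ω

lemma apply_exerciseTime_eq_indicator (X : ℕ → Ω → ℝ) (hj : j < J) :
    (fun ω => X (exerciseTime Z C J j ω) ω) =
      {ω | C j ω ≤ Z j ω}.indicator (X j) +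
        {ω | C j ω ≤ Z j ω}ᶜ.indicator (fun ω => X (exerciseTime Z C J (j + 1) ω) ω) := by
  funext ω
  by_cases h : C j ω ≤ Z j ω
  · simp [h, exerciseTime_of_le hj.le h]
  · simp [h, exerciseTime_of_lt (not_le.1 h)]

lemma integrable_snell (hZ : ∀ j, Integrable (Z j) μ) (hYJ : ∀ ω, Y J ω = Z J ω)
    (hY : ∀ j, j < J → ∀ ω, Y j ω = max (Z j ω) ((μ[Y (j + 1) | ℱ j]) ω)) (hj : j ≤ J) :
    Integrable (Y j) μ := by
  induction hj using Nat.decreasingInduction with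
  | self => rw [funext hYJ]; exact hZ J
  | of_succ j hj _ => rw [funext (hY j hj)]; exact (hZ j).sup integrable_condExp

variable [IsFiniteMeasure μ]

lemma condExp_apply_exerciseTime_ae_eq (hM : Martingale M ℱ μ) (hZ_adapted : Adapted ℱ Z)
    (hZ : ∀ j, Integrable (Z j) μ) (hYJ : ∀ ω, Y J ω = Z J ω)
    (hY : ∀ j, j < J → ∀ ω, Y j ω = max (Z j ω) ((μ[Y (j + 1) | ℱ j]) ω))
    (hC : ∀ i, i < J → C i = μ[Y (i + 1) | ℱ i]) (hj : j ≤ J) :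
    Integrable (fun ω => (Z - M) (exerciseTime Z C J j ω) ω) μ ∧
      μ[fun ω => (Z - M) (exerciseTime Z C J j ω) ω | ℱ j] =ᵐ[μ] Y j - M j := by
  have hX_sm : ∀ j, StronglyMeasurable[ℱ j] ((Z - M) j) :=
    fun j => (hZ_adapted j).stronglyMeasurable.sub (hM.stronglyAdapted j)
  have hX_int : ∀ j, Integrable ((Z - M) j) μ := fun j => (hZ j).sub (hM.integrable j)
  induction hj using Nat.decreasingInduction with
  | self =>
    simp only [exerciseTime_self]
    refine ⟨hX_int J, ?_⟩
    rw [condExp_of_stronglyMeasurable (ℱ.le J) (hX_sm J) (hX_int J)]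
    exact .of_eq (funext fun ω => by simp [hYJ])
  | of_succ j hj ih =>
    obtain ⟨hG_int, hG⟩ := ih
    set A := {ω | C j ω ≤ Z j ω}
    have hA : MeasurableSet[ℱ j] A := by
      refine measurableSet_le ?_ (hZ_adapted j)
      rw [hC j hj]
      exact stronglyMeasurable_condExp.measurable
    have hcont : μ[fun ω => (Z - M) (exerciseTime Z C J (j + 1) ω) ω | ℱ j] =ᵐ[μ] C j - M j :=
      calc _ =ᵐ[μ] μ[μ[fun ω => (Z - M) (exerciseTime Z C J (j + 1) ω) ω | ℱ (j + 1)] | ℱ j] :=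
            (condExp_condExp_of_le (ℱ.mono j.le_succ) (ℱ.le (j + 1))).symm
        _ =ᵐ[μ] μ[Y (j + 1) - M (j + 1) | ℱ j] := condExp_congr_ae hG
        _ =ᵐ[μ] μ[Y (j + 1) | ℱ j] - μ[M (j + 1) | ℱ j] :=
            condExp_sub (integrable_snell hZ hYJ hY hj) (hM.integrable _) _
        _ =ᵐ[μ] C j - M j := by
            rw [hC j hj]
            exact Filter.EventuallyEq.rfl.sub (hM.condExp_ae_eq j.le_succ)
    rw [apply_exerciseTime_eq_indicator (Z - M) hj]
    refine ⟨((hX_int j).indicator (ℱ.le j _ hA)).add (hG_int.indicator (ℱ.le j _ hA.compl)), ?_⟩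
    filter_upwards [condExp_indicator_add_indicator_compl (ℱ.le j) hA (hX_sm j) (hX_int j) hG_int,
      hcont] with ω hsplit hcontω
    rw [hsplit, Pi.sub_apply (Y j), hY j hj ω, ← hC j hj]
    by_cases hω : C j ω ≤ Z j ω
    · simp [A, hω]
    · simpa [A, hω, (not_le.1 hω).le] using hcontω

lemma ae_eq_condExp_sup'_iff (hM : Martingale M ℱ μ) (hZ : ∀ j, Integrable (Z j) μ)
    (hj : j ≤ J) {σ : Ω → ℕ} (hσ : ∀ ω, σ ω ∈ Finset.Icc j J)
    (hG_int : Integrable (fun ω => (Z - M) (σ ω) ω) μ)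
    (hG : μ[fun ω => (Z - M) (σ ω) ω | ℱ j] =ᵐ[μ] Y j - M j) :
    Y j =ᵐ[μ] μ[fun ω => (Finset.Icc j J).sup' (Finset.nonempty_Icc.mpr hj)
        (fun r => Z r ω - M r ω + M j ω) | ℱ j] ↔
      ∀ᵐ ω ∂μ, ∀ r ∈ Finset.Icc j J, Z r ω - M r ω ≤ Z (σ ω) ω - M (σ ω) ω := by
  set S := fun ω => (Finset.Icc j J).sup' (Finset.nonempty_Icc.mpr hj) fun r => Z r ω - M r ω
  have hS_int : Integrable S μ :=
    integrable_finset_sup' _ fun r _ => (hZ r).sub (hM.integrable r)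
  have hshift : μ[fun ω => (Finset.Icc j J).sup' (Finset.nonempty_Icc.mpr hj)
      (fun r => Z r ω - M r ω + M j ω) | ℱ j] =ᵐ[μ] μ[S | ℱ j] + M j := by
    rw [show (fun ω => (Finset.Icc j J).sup' _ fun r => Z r ω - M r ω + M j ω) = S + M j from
      funext fun ω => (Finset.sup'_add _ _ _ _).symm]
    simpa only [condExp_of_stronglyMeasurable (ℱ.le j) (hM.stronglyAdapted j) (hM.integrable j)]
      using condExp_add hS_int (hM.integrable j) (ℱ j)
  calc _ ↔ μ[fun ω => (Z - M) (σ ω) ω | ℱ j] =ᵐ[μ] μ[S | ℱ j] := by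
        constructor <;> intro h <;> filter_upwards [h, hshift, hG] with ω h₁ h₂ h₃ <;>
          simp only [Pi.add_apply, Pi.sub_apply] at * <;> linarith
    _ ↔ (fun ω => (Z - M) (σ ω) ω) =ᵐ[μ] S :=
        condExp_ae_eq_condExp_iff_of_ae_le (ℱ.le j) hG_int hS_int
          (.of_forall fun ω => Finset.le_sup' (fun r => Z r ω - M r ω) (hσ ω))
    _ ↔ _ := by
        refine Filter.eventually_congr (.of_forall fun ω => ?_)
        rw [eq_comm, ← Finset.forall_sup'_eq_apply_iff (hσ ω)]
        exact ⟨fun h _ => h, fun h => h _⟩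

end OptimalStopping

end MeasureTheory

section ExerciseDates

variable {Ω : Type*} {J L : ℕ} {τ : ℕ → Ω → ℤ} {ω : Ω}

lemma exists_between_exerciseDates (hτ0 : τ 0 ω = -1) (hτlast : τ L ω = J) {j : ℕ} (hj : j ≤ J) :
    ∃ l, 1 ≤ l ∧ l ≤ L ∧ τ (l - 1) ω < j ∧ j ≤ τ l ω := by
  classical
  have hL : (j : ℤ) ≤ τ L ω := by rw [hτlast]; exact_mod_cast hj
  have hex : ∃ l, (j : ℤ) ≤ τ l ω := ⟨L, hL⟩
  have hpos : Nat.find hex ≠ 0 := fun h0 => by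
    have := Nat.find_spec hex
    rw [h0, hτ0] at this
    omega
  exact ⟨Nat.find hex, by omega, Nat.find_min' hex hL,
    not_le.1 (Nat.find_min hex (by omega)), Nat.find_spec hex⟩

lemma forall_Icc_le_iff_forall_Ioc_le (hτ0 : τ 0 ω = -1) (hτlast : τ L ω = J)
    (hτmono : ∀ l, 1 ≤ l → l ≤ L → τ (l - 1) ω < τ l ω)
    (hτnonneg : ∀ l, 1 ≤ l → l ≤ L → 0 ≤ τ l ω) {σ : ℕ → ℕ}
    (hσ : ∀ l, 1 ≤ l → l ≤ L → ∀ j : ℕ, τ (l - 1) ω < j → j ≤ τ l ω → σ j = (τ l ω).toNat)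
    {f : ℕ → ℝ} :
    (∀ j ≤ J, ∀ r ∈ Finset.Icc j J, f r ≤ f (σ j)) ↔
      ∀ l, 1 ≤ l → l ≤ L → ∀ r ≤ J, τ (l - 1) ω < r → f r ≤ f (τ l ω).toNat := by
  constructor
  · intro h l hl1 hlL r hrJ hr
    have := hτmono l hl1 hlL
    have := hτnonneg l hl1 hlL
    rw [← hσ l hl1 hlL (τ (l - 1) ω + 1).toNat (by omega) (by omega)]
    exact h _ (by omega) r (Finset.mem_Icc.2 ⟨by omega, hrJ⟩)
  · intro h j hj r hr
    obtain ⟨l, hl1, hlL, hjl, hjl'⟩ := exists_between_exerciseDates hτ0 hτlast hj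
    rw [Finset.mem_Icc] at hr
    rw [hσ l hl1 hlL j hjl hjl']
    exact h l hl1 hlL r hr.2 (by omega)

lemma forall_Ioc_le_iff_structural_identities (hτlast : τ L ω = J)
    (hτmono : ∀ l, 1 ≤ l → l ≤ L → τ (l - 1) ω < τ l ω)
    (hτrange : ∀ l, 1 ≤ l → l ≤ L → 0 ≤ τ l ω ∧ τ l ω ≤ (J : ℤ)) {f : ℕ → ℝ} :
    (∀ l, 1 ≤ l → l ≤ L → ∀ r ≤ J, τ (l - 1) ω < r → f r ≤ f (τ l ω).toNat) ↔
      ∀ l, 1 ≤ l → l ≤ L →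
        (∀ hne : (itvIoc J τ l ω).Nonempty, (itvIoc J τ l ω).sup' hne f = f (τ l ω).toNat) ∧
        (2 ≤ l → ∀ hne : (itvIcc J τ l ω).Nonempty,
          (itvIcc J τ l ω).sup' hne f = f (τ (l - 1) ω).toNat) := by
  have hIoc : ∀ l, 1 ≤ l → l ≤ L → (τ l ω).toNat ∈ itvIoc J τ l ω := by
    intro l hl1 hlL
    have := hτmono l hl1 hlL
    have := hτrange l hl1 hlL
    simp only [itvIoc, Finset.mem_filter, Finset.mem_Icc]
    omega
  have hIcc : ∀ l, 2 ≤ l → l ≤ L → (τ (l - 1) ω).toNat ∈ itvIcc J τ l ω := by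
    intro l hl2 hlL
    have := hτmono l (by omega) hlL
    have := hτrange l (by omega) hlL
    have := hτrange (l - 1) (by omega) (by omega)
    simp only [itvIcc, Finset.mem_filter, Finset.mem_Icc]
    omega
  constructor
  · intro h l hl1 hlL
    refine ⟨(Finset.forall_sup'_eq_apply_iff (hIoc l hl1 hlL)).2 fun r hr => ?_,
      fun hl2 => (Finset.forall_sup'_eq_apply_iff (hIcc l hl2 hlL)).2 fun r hr => ?_⟩
    · simp only [itvIoc, Finset.mem_filter, Finset.mem_Icc] at hr
      exact h l hl1 hlL r hr.1.2 hr.2.1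
    · simp only [itvIcc, Finset.mem_filter, Finset.mem_Icc] at hr
      have := hτmono (l - 1) (by omega) (by omega)
      exact h (l - 1) (by omega) (by omega) r hr.1.2 (by omega)
  · intro h l hl1 hlL
    induction hlL using Nat.decreasingInduction with
    | self =>
      intro r hrJ hr
      refine (Finset.forall_sup'_eq_apply_iff (hIoc L hl1 le_rfl)).1 (h L hl1 le_rfl).1 r ?_
      simp only [itvIoc, Finset.mem_filter, Finset.mem_Icc, hτlast]
      omega
    | of_succ k hk ih =>
      intro r hrJ hr
      by_cases hrk : r ≤ τ k ω
      · refine (Finset.forall_sup'_eq_apply_iff (hIoc k hl1 hk.le)).1 (h k hl1 hk.le).1 r ?_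
        simp only [itvIoc, Finset.mem_filter, Finset.mem_Icc]
        have := (hτrange k hl1 hk.le).2
        omega
      · have hmax := (Finset.forall_sup'_eq_apply_iff (hIcc (k + 1) (by omega) hk)).1
          ((h (k + 1) (by omega) hk).2 (by omega))
        have hmem := hIoc (k + 1) (by omega) hk
        simp only [itvIoc, itvIcc, Finset.mem_filter, Finset.mem_Icc, Nat.add_sub_cancel]
          at hmax hmem
        exact (ih (by omega) r hrJ (by simpa using not_le.1 hrk)).trans
          (hmax _ ⟨hmem.1, by omega, by omega⟩)

end ExerciseDates

theorem mem_weakly_optimal_iff_structural_identities_general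
    {Ω : Type*} {mΩ : MeasurableSpace Ω} {μ : Measure Ω} [IsProbabilityMeasure μ]
    (J : ℕ) (ℱ : Filtration ℕ mΩ)
    (Z Y : ℕ → Ω → ℝ)
    (hZ_adapted : Adapted ℱ Z)
    (hZ_int : ∀ j, Integrable (Z j) μ)
    (hYJ : ∀ ω, Y J ω = Z J ω)
    (hY : ∀ j, j < J → ∀ ω, Y j ω = max (Z j ω) ((μ[Y (j + 1) | ℱ j]) ω))
    -- the continuation value `C i = E[Y (i+1) | ℱ i]`, with the convention `Y (J+1) := 0`
    (C : ℕ → Ω → ℝ)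
    (hC : ∀ i, i < J → C i = μ[Y (i + 1) | ℱ i])
    -- the successive optimal exercise dates `τ^l`, `1 ≤ l ≤ L ω`, with `τ^0 = −1`
    (τ : ℕ → Ω → ℤ) (L : Ω → ℕ)
    (hτ0 : ∀ ω, τ 0 ω = -1)
    (hτlast : ∀ ω, τ (L ω) ω = (J : ℤ))
    (hτmono : ∀ ω, ∀ l, 1 ≤ l → l ≤ L ω → τ (l - 1) ω < τ l ω)
    (hτrange : ∀ ω, ∀ l, 1 ≤ l → l ≤ L ω → 0 ≤ τ l ω ∧ τ l ω ≤ (J : ℤ))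
    (hτstop : ∀ ω, ∀ l, 1 ≤ l → l ≤ L ω → C (τ l ω).toNat ω ≤ Z (τ l ω).toNat ω)
    (hτmin : ∀ ω, ∀ l, 1 ≤ l → l ≤ L ω →
      ∀ i : ℕ, τ (l - 1) ω < (i : ℤ) → (i : ℤ) < τ l ω → Z i ω < C i ω)
    (M : ℕ → Ω → ℝ) :
    (Martingale M ℱ μ ∧ (∀ ω, M 0 ω = 0) ∧
      ∀ j, ∀ hj : j ≤ J,
        Y j =ᵐ[μ] μ[fun ω => (Finset.Icc j J).sup' (Finset.nonempty_Icc.mpr hj)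
          (fun r => Z r ω - M r ω + M j ω) | ℱ j])
    ↔
    (Martingale M ℱ μ ∧ (∀ ω, M 0 ω = 0) ∧
      ∀ᵐ ω ∂μ, ∀ l, 1 ≤ l → l ≤ L ω →
        (∀ hne : (itvIoc J τ l ω).Nonempty,
          (itvIoc J τ l ω).sup' hne (fun r => Z r ω - M r ω)
            = Z (τ l ω).toNat ω - M (τ l ω).toNat ω)
        ∧ (2 ≤ l → ∀ hne : (itvIcc J τ l ω).Nonempty,
          (itvIcc J τ l ω).sup' hne (fun r => Z r ω - M r ω)
            = Z (τ (l - 1) ω).toNat ω - M (τ (l - 1) ω).toNat ω)) := by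
  have hσ : ∀ ω l, 1 ≤ l → l ≤ L ω → ∀ j : ℕ, τ (l - 1) ω < j → j ≤ τ l ω →
      exerciseTime Z C J j ω = (τ l ω).toNat := fun ω l hl1 hlL j hj hj' => by
    have := hτrange ω l hl1 hlL
    exact exerciseTime_eq (by omega) (by omega) (hτstop ω l hl1 hlL)
      fun i hji hit => hτmin ω l hl1 hlL i (by omega) (by omega)
  refine and_congr_right fun hM => and_congr_right fun _ => ?_
  calc _ ↔ ∀ j ≤ J, ∀ᵐ ω ∂μ, ∀ r ∈ Finset.Icc j J,
        Z r ω - M r ω ≤ Z (exerciseTime Z C J j ω) ω - M (exerciseTime Z C J j ω) ω :=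
        forall₂_congr fun j hj =>
          have hG := condExp_apply_exerciseTime_ae_eq hM hZ_adapted hZ_int hYJ hY hC hj
          ae_eq_condExp_sup'_iff hM hZ_int hj (fun ω => Finset.mem_Icc.2
            (exerciseTime_mem_Icc hj ω)) hG.1 hG.2
    _ ↔ ∀ᵐ ω ∂μ, ∀ j ≤ J, ∀ r ∈ Finset.Icc j J,
        Z r ω - M r ω ≤ Z (exerciseTime Z C J j ω) ω - M (exerciseTime Z C J j ω) ω := by
        simp only [ae_all_iff, Filter.eventually_imp_distrib_left]
    _ ↔ _ := Filter.eventually_congr (.of_forall fun ω =>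
        (forall_Icc_le_iff_forall_Ioc_le (hτ0 ω) (hτlast ω) (hτmono ω)
          (fun l hl1 hlL => (hτrange ω l hl1 hlL).1) (hσ ω)).trans
        (forall_Ioc_le_iff_structural_identities (hτlast ω) (hτmono ω) (hτrange ω)))

/-- **Lemma 1: structural identities for `M^∘`.** A martingale `M` with `M 0 = 0` is weakly
optimal at every date `j = 0,…,J` if and only if, almost surely,
(i) `max_{τ^{l−1} < r ≤ τ^l} (Z r − M r) = Z (τ^l) − M (τ^l)` for every `l ≥ 1` and
(ii) `max_{τ^{l−1} ≤ r ≤ τ^l} (Z r − M r) = Z (τ^{l−1}) − M (τ^{l−1})` for every `l > 1`,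
where `τ^1 < τ^2 < ⋯ < τ^{l_J} = J` are the successive optimal exercise dates (`τ^0 := −1`,
`τ^l := inf{ i : τ^{l−1} < i ≤ J, Z i ≥ E[Y (i+1) | ℱ i] }`, with `Y (J+1) := 0`),
`L ω = l_J` being the final index. -/
theorem mem_weakly_optimal_iff_structural_identities
    {Ω : Type*} {mΩ : MeasurableSpace Ω} {μ : Measure Ω} [IsProbabilityMeasure μ]
    (J : ℕ) (ℱ : Filtration ℕ mΩ)
    (Z Y : ℕ → Ω → ℝ)
    (hZ_adapted : Adapted ℱ Z)
    (hZ_int : ∀ j, Integrable (Z j) μ)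
    (hYJ : ∀ ω, Y J ω = Z J ω)
    (hY : ∀ j, j < J → ∀ ω, Y j ω = max (Z j ω) ((μ[Y (j + 1) | ℱ j]) ω))
    -- the continuation value `C i = E[Y (i+1) | ℱ i]`, with the convention `Y (J+1) := 0`
    (C : ℕ → Ω → ℝ)
    (hC : ∀ i, i < J → C i = μ[Y (i + 1) | ℱ i])
    (hCJ : ∀ ω, C J ω = 0)
    -- the successive optimal exercise dates `τ^l`, `1 ≤ l ≤ L ω`, with `τ^0 = −1`
    (τ : ℕ → Ω → ℤ) (L : Ω → ℕ)
    (hτ0 : ∀ ω, τ 0 ω = -1)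
    (hL1 : ∀ ω, 1 ≤ L ω)
    (hτlast : ∀ ω, τ (L ω) ω = (J : ℤ))
    (hτmono : ∀ ω, ∀ l, 1 ≤ l → l ≤ L ω → τ (l - 1) ω < τ l ω)
    (hτrange : ∀ ω, ∀ l, 1 ≤ l → l ≤ L ω → 0 ≤ τ l ω ∧ τ l ω ≤ (J : ℤ))
    (hτstop : ∀ ω, ∀ l, 1 ≤ l → l ≤ L ω → C (τ l ω).toNat ω ≤ Z (τ l ω).toNat ω)
    (hτmin : ∀ ω, ∀ l, 1 ≤ l → l ≤ L ω →
      ∀ i : ℕ, τ (l - 1) ω < (i : ℤ) → (i : ℤ) < τ l ω → Z i ω < C i ω)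
    (M : ℕ → Ω → ℝ) :
    (Martingale M ℱ μ ∧ (∀ ω, M 0 ω = 0) ∧
      ∀ j, ∀ hj : j ≤ J,
        Y j =ᵐ[μ] μ[fun ω => (Finset.Icc j J).sup' (Finset.nonempty_Icc.mpr hj)
          (fun r => Z r ω - M r ω + M j ω) | ℱ j])
    ↔
    (Martingale M ℱ μ ∧ (∀ ω, M 0 ω = 0) ∧
      ∀ᵐ ω ∂μ, ∀ l, 1 ≤ l → l ≤ L ω →
        (∀ hne : (itvIoc J τ l ω).Nonempty,
          (itvIoc J τ l ω).sup' hne (fun r => Z r ω - M r ω)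
            = Z (τ l ω).toNat ω - M (τ l ω).toNat ω)
        ∧ (2 ≤ l → ∀ hne : (itvIcc J τ l ω).Nonempty,
          (itvIcc J τ l ω).sup' hne (fun r => Z r ω - M r ω)
            = Z (τ (l - 1) ω).toNat ω - M (τ (l - 1) ω).toNat ω)) :=
  mem_weakly_optimal_iff_structural_identities_general J ℱ Z Y hZ_adapted hZ_int hYJ hY C hC τ L hτ0
    hτlast hτmono hτrange hτstop hτmin M
end

section
/- (Lemma 2: sufficient conditions on the shift.) Let (S_i)_{0 ≤ i ≤ J} be an adapted process with S_0 = 0 and set M_i := M*_i − S_i, where M* is the Doob martingale of the Snell envelope. Suppose that for all 0 ≤ i ≤ J, with l_i the unique index such that τ^{l_i−1} < i ≤ τ^{l_i}: (c1) max_{τ^{l_i−1} < r ≤ i} ( Z_r − Y*_r + S_r − S_i ) ≤ 0, and (c2) Z_{τ^{l_i−1}} − E[Y*_{τ^{l_i−1}+1} | F_{τ^{l_i−1}}] + S_{τ^{l_i−1}} − S_i ≥ 0 whenever l_i > 1 (both almost surely). Then M satisfies, almost surely, the identities (i) max_{τ^{l−1} < r ≤ τ^l} (Z_r − M_r) = Z_{τ^l}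 − M_{τ^l} for all l ≥ 1 and (ii) max_{τ^{l−1} ≤ r ≤ τ^l} (Z_r − M_r) = Z_{τ^{l−1}} − M_{τ^{l−1}} for all l > 1. -/
open MeasureTheory Finset

/-- **Lemma 2: sufficient conditions on the shift.** Let `S` be adapted with `S 0 = 0` and set
`M := M⋆ − S`, where `M⋆` is the Doob martingale of the Snell envelope. If, almost surely,
for all `0 ≤ i ≤ J` with `l_i` the unique index such that `τ^{l_i−1} < i ≤ τ^{l_i}`:
(c1) `max_{τ^{l_i−1} < r ≤ i} (Z r − Y r + S r − S i) ≤ 0`, and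
(c2) `Z (τ^{l_i−1}) − E[Y (τ^{l_i−1}+1) | ℱ (τ^{l_i−1})] + S (τ^{l_i−1}) − S i ≥ 0`
whenever `l_i > 1`, then `M` satisfies, almost surely, the identities
(i) `max_{τ^{l−1} < r ≤ τ^l} (Z r − M r) = Z (τ^l) − M (τ^l)` for all `l ≥ 1` and
(ii) `max_{τ^{l−1} ≤ r ≤ τ^l} (Z r − M r) = Z (τ^{l−1}) − M (τ^{l−1})` for all `l > 1`. -/
theorem shifted_doob_martingale_structural_identities
    {Ω : Type*} {mΩ : MeasurableSpace Ω} {μ : Measure Ω} [IsProbabilityMeasure μ]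
    (J : ℕ) (ℱ : Filtration ℕ mΩ)
    (Z Y Mstar : ℕ → Ω → ℝ)
    (hZ_adapted : Adapted ℱ Z)
    (hZ_int : ∀ j, Integrable (Z j) μ)
    (hYJ : ∀ ω, Y J ω = Z J ω)
    (hY : ∀ j, j < J → ∀ ω, Y j ω = max (Z j ω) ((μ[Y (j + 1) | ℱ j]) ω))
    (hMstar : ∀ j ω, Mstar j ω =
      ∑ l ∈ Finset.range j, (Y (l + 1) ω - (μ[Y (l + 1) | ℱ l]) ω))
    -- the continuation value `C i = E[Y (i+1) | ℱ i]`, with the convention `Y (J+1) := 0`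
    (C : ℕ → Ω → ℝ)
    (hC : ∀ i, i < J → C i = μ[Y (i + 1) | ℱ i])
    (hCJ : ∀ ω, C J ω = 0)
    -- the successive optimal exercise dates `τ^l`, `1 ≤ l ≤ L ω`, with `τ^0 = −1`
    (τ : ℕ → Ω → ℤ) (L : Ω → ℕ)
    (hτ0 : ∀ ω, τ 0 ω = -1)
    (hL1 : ∀ ω, 1 ≤ L ω)
    (hτlast : ∀ ω, τ (L ω) ω = (J : ℤ))
    (hτmono : ∀ ω, ∀ l, 1 ≤ l → l ≤ L ω → τ (l - 1) ω < τ l ω)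
    (hτrange : ∀ ω, ∀ l, 1 ≤ l → l ≤ L ω → 0 ≤ τ l ω ∧ τ l ω ≤ (J : ℤ))
    (hτstop : ∀ ω, ∀ l, 1 ≤ l → l ≤ L ω → C (τ l ω).toNat ω ≤ Z (τ l ω).toNat ω)
    (hτmin : ∀ ω, ∀ l, 1 ≤ l → l ≤ L ω →
      ∀ i : ℕ, τ (l - 1) ω < (i : ℤ) → (i : ℤ) < τ l ω → Z i ω < C i ω)
    -- the adapted shift `S` and the shifted Doob martingale `M = M⋆ − S`
    (S M : ℕ → Ω → ℝ)
    (hS_adapted : Adapted ℱ S)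
    (hS0 : ∀ ω, S 0 ω = 0)
    (hMdef : ∀ i ω, M i ω = Mstar i ω - S i ω)
    -- conditions (c1) and (c2)
    (hc : ∀ᵐ ω ∂μ, ∀ i, i ≤ J → ∀ l, 1 ≤ l → l ≤ L ω →
      τ (l - 1) ω < (i : ℤ) → (i : ℤ) ≤ τ l ω →
      (∀ r : ℕ, τ (l - 1) ω < (r : ℤ) → r ≤ i → Z r ω - Y r ω + S r ω - S i ω ≤ 0)
      ∧ (2 ≤ l →
          0 ≤ Z (τ (l - 1) ω).toNat ω - C (τ (l - 1) ω).toNat ω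
            + S (τ (l - 1) ω).toNat ω - S i ω)) :
    ∀ᵐ ω ∂μ, ∀ l, 1 ≤ l → l ≤ L ω →
      (∀ hne : (itvIoc J τ l ω).Nonempty,
        (itvIoc J τ l ω).sup' hne (fun r => Z r ω - M r ω)
          = Z (τ l ω).toNat ω - M (τ l ω).toNat ω)
      ∧ (2 ≤ l → ∀ hne : (itvIcc J τ l ω).Nonempty,
        (itvIcc J τ l ω).sup' hne (fun r => Z r ω - M r ω)
          = Z (τ (l - 1) ω).toNat ω - M (τ (l - 1) ω).toNat ω) := by
  filter_upwards [hc] with ω hcω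
  -- basic pointwise facts
  have hMstep : ∀ k, k < J → Mstar (k + 1) ω = Mstar k ω + (Y (k + 1) ω - C k ω) := by
    intro k hk
    rw [hMstar (k + 1), hMstar k, hC k hk, Finset.sum_range_succ]
  have key : ∀ l, 1 ≤ l → l ≤ L ω → ∀ r s : ℕ, τ (l - 1) ω < (r : ℤ) → r ≤ s →
      ((s : ℤ) ≤ τ l ω → Mstar s ω = Mstar r ω + Y s ω - Y r ω) := by
    intro l hl1 hl2 r s hr hrs
    induction s, hrs using Nat.le_induction with
    | base => intro _; ring
    | succ s hrs ih =>
      intro hs1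
      have hsτ : (s : ℤ) < τ l ω := by
        have : ((s : ℤ) + 1) ≤ τ l ω := by exact_mod_cast hs1
        omega
      have hsJ : s < J := by
        have h2 := (hτrange ω l hl1 hl2).2
        have : (s : ℤ) < (J : ℤ) := lt_of_lt_of_le hsτ h2
        exact_mod_cast this
      have hrs' : (r : ℤ) ≤ (s : ℤ) := by exact_mod_cast hrs
      have hYs : Y s ω = C s ω := by
        rw [hY s hsJ ω, hC s hsJ] at *
        exact max_eq_right (le_of_lt (by
          have := hτmin ω l hl1 hl2 s (lt_of_lt_of_le hr hrs') hsτ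
          rwa [hC s hsJ] at this))
      have h1 := hMstep s hsJ
      have h2 := ih (le_of_lt hsτ)
      linarith
  intro l hl1 hl2
  have hτm := hτmono ω l hl1 hl2
  have hτr := hτrange ω l hl1 hl2
  set t : ℕ := (τ l ω).toNat with htdef
  have ht : (t : ℤ) = τ l ω := Int.toNat_of_nonneg hτr.1
  have htJ : t ≤ J := by
    have : (t : ℤ) ≤ (J : ℤ) := ht ▸ hτr.2
    exact_mod_cast this
  have hCt : C t ω ≤ Z t ω := hτstop ω l hl1 hl2
  have hYt : Y t ω = Z t ω := by
    rcases lt_or_eq_of_le htJ with h | h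
    · rw [hY t h ω, hC t h] at *
      exact max_eq_left hCt
    · rw [h]; exact hYJ ω
  constructor
  · -- part (i)
    intro hne
    have htmem : t ∈ itvIoc J τ l ω := by
      simp only [itvIoc, Finset.mem_filter, Finset.mem_Icc]
      exact ⟨⟨Nat.zero_le _, htJ⟩, ht ▸ hτm, ht ▸ le_refl _⟩
    apply le_antisymm
    · apply Finset.sup'_le
      intro r hrmem
      simp only [itvIoc, Finset.mem_filter, Finset.mem_Icc] at hrmem
      obtain ⟨⟨-, hrJ⟩, hr1, hr2⟩ := hrmem
      have hrt : r ≤ t := by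
        have : (r : ℤ) ≤ (t : ℤ) := ht ▸ hr2
        exact_mod_cast this
      have hkey := key l hl1 hl2 r t hr1 hrt (ht ▸ le_refl _)
      have hc1 := (hcω t htJ l hl1 hl2 (ht ▸ hτm) (ht ▸ le_refl _)).1 r hr1 hrt
      rw [hMdef, hMdef]
      linarith
    · exact Finset.le_sup' (fun r => Z r ω - M r ω) htmem
  · -- part (ii)
    intro hl2'
    intro hne
    have hl1' : 1 ≤ l - 1 := by omega
    have hl2'' : l - 1 ≤ L ω := by omega
    have hτr' := hτrange ω (l - 1) hl1' hl2''
    set t' : ℕ := (τ (l - 1) ω).toNat with ht'def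
    have ht' : (t' : ℤ) = τ (l - 1) ω := Int.toNat_of_nonneg hτr'.1
    have ht'J : t' < J := by
      have : (t' : ℤ) < (J : ℤ) := by rw [ht']; exact lt_of_lt_of_le hτm hτr.2
      exact_mod_cast this
    have hCt' : C t' ω ≤ Z t' ω := hτstop ω (l - 1) hl1' hl2''
    have hYt' : Y t' ω = Z t' ω := by
      rw [hY t' ht'J ω, hC t' ht'J] at *
      exact max_eq_left hCt'
    have ht'mem : t' ∈ itvIcc J τ l ω := by
      simp only [itvIcc, Finset.mem_filter, Finset.mem_Icc]
      exact ⟨⟨Nat.zero_le _, le_of_lt ht'J⟩, ht' ▸ le_refl _, ht' ▸ le_of_lt hτm⟩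
    have hstep := hMstep t' ht'J
    apply le_antisymm
    · apply Finset.sup'_le
      intro r hrmem
      simp only [itvIcc, Finset.mem_filter, Finset.mem_Icc] at hrmem
      obtain ⟨⟨-, hrJ⟩, hr1, hr2⟩ := hrmem
      rcases eq_or_lt_of_le hr1 with h | h
      · have : r = t' := by
          have : (r : ℤ) = (t' : ℤ) := by rw [ht']; exact h.symm
          exact_mod_cast this
        rw [this]
      · -- τ (l-1) < r ≤ τ l
        have ht'r : t' + 1 ≤ r := by
          have : (t' : ℤ) < (r : ℤ) := ht' ▸ h
          have := (by exact_mod_cast this : t' < r)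
          omega
        have hr1' : τ (l - 1) ω < ((t' + 1 : ℕ) : ℤ) := by
          push_cast; rw [ht'] at *; omega
        have hkey := key l hl1 hl2 (t' + 1) r hr1' ht'r hr2
        have hcr := hcω r (by
            have : (r : ℤ) ≤ (J : ℤ) := le_trans hr2 hτr.2
            exact_mod_cast this) l hl1 hl2 h hr2
        have hc1 := hcr.1 r h (le_refl r)
        have hc2 := hcr.2 hl2'
        rw [← ht'def] at hc2
        rw [hMdef, hMdef]
        linarith
    · exact Finset.le_sup' (fun r => Z r ω - M r ω) ht'mem
end

section
/- (Corollary 1: increment form of the conditions.) Let S be an adapted process with S_0 = 0 and increments ζ_{i+1} := S_{i+1} − S_i (each ζ_{i+1} being F_{i+1}-measurable), 0 ≤ i < J. Then conditions (c1)–(c2) hold if and only if almost surely: (i) on the F_i-measurable event { τ^{l_i−1} < i < τ^{l_i} } one has ζ_{i+1} ≥ max_{τ^{l_i−1} < r ≤ i} ( Z_r − Y*_r + S_r − S_i ), and moreover ζ_{i+1} ≤ Z_{τ^{l_i−1}} − E[Y*_{τ^{l_i−1}+1} | F_{τ^{l_i−1}}] + S_{τ^{l_i−1}} − S_i whenever l_i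 > 1; (ii) on the event { τ^{l_i} = i } one has ζ_{i+1} ≤ Z_i − E[Y*_{i+1} | F_i]. -/
open MeasureTheory Finset

/-- **Corollary 1: increment form of the conditions (c1)–(c2).** Let `S` be adapted with
`S 0 = 0` and increments `ζ (i+1) := S (i+1) − S i`. Then conditions (c1)–(c2) hold if and only
if, almost surely: (i) on the event `{ τ^{l_i−1} < i < τ^{l_i} }` one has
`ζ (i+1) ≥ max_{τ^{l_i−1} < r ≤ i} (Z r − Y r + S r − S i)`, and moreover
`ζ (i+1) ≤ Z (τ^{l_i−1}) − E[Y (τ^{l_i−1}+1) | ℱ (τ^{l_i−1})] + S (τ^{l_i−1}) − S i`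
whenever `l_i > 1`; (ii) on the event `{ τ^{l_i} = i }` one has
`ζ (i+1) ≤ Z i − E[Y (i+1) | ℱ i]`. -/
theorem conditions_c1_c2_iff_increment_conditions
    {Ω : Type*} {mΩ : MeasurableSpace Ω} {μ : Measure Ω} [IsProbabilityMeasure μ]
    (J : ℕ) (ℱ : Filtration ℕ mΩ)
    (Z Y : ℕ → Ω → ℝ)
    (hZ_adapted : Adapted ℱ Z)
    (hZ_int : ∀ j, Integrable (Z j) μ)
    (hYJ : ∀ ω, Y J ω = Z J ω)
    (hY : ∀ j, j < J → ∀ ω, Y j ω = max (Z j ω) ((μ[Y (j + 1) | ℱ j]) ω))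
    -- the continuation value `C i = E[Y (i+1) | ℱ i]`, with the convention `Y (J+1) := 0`
    (C : ℕ → Ω → ℝ)
    (hC : ∀ i, i < J → C i = μ[Y (i + 1) | ℱ i])
    (hCJ : ∀ ω, C J ω = 0)
    -- the successive optimal exercise dates `τ^l`, `1 ≤ l ≤ L ω`, with `τ^0 = −1`
    (τ : ℕ → Ω → ℤ) (L : Ω → ℕ)
    (hτ0 : ∀ ω, τ 0 ω = -1)
    (hL1 : ∀ ω, 1 ≤ L ω)
    (hτlast : ∀ ω, τ (L ω) ω = (J : ℤ))
    (hτmono : ∀ ω, ∀ l, 1 ≤ l → l ≤ L ω → τ (l - 1) ω < τ l ω)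
    (hτrange : ∀ ω, ∀ l, 1 ≤ l → l ≤ L ω → 0 ≤ τ l ω ∧ τ l ω ≤ (J : ℤ))
    (hτstop : ∀ ω, ∀ l, 1 ≤ l → l ≤ L ω → C (τ l ω).toNat ω ≤ Z (τ l ω).toNat ω)
    (hτmin : ∀ ω, ∀ l, 1 ≤ l → l ≤ L ω →
      ∀ i : ℕ, τ (l - 1) ω < (i : ℤ) → (i : ℤ) < τ l ω → Z i ω < C i ω)
    -- the adapted shift `S`
    (S : ℕ → Ω → ℝ)
    (hS_adapted : Adapted ℱ S)
    (hS0 : ∀ ω, S 0 ω = 0) :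
    -- conditions (c1) and (c2) …
    (∀ᵐ ω ∂μ, ∀ i, i ≤ J → ∀ l, 1 ≤ l → l ≤ L ω →
      τ (l - 1) ω < (i : ℤ) → (i : ℤ) ≤ τ l ω →
      (∀ r : ℕ, τ (l - 1) ω < (r : ℤ) → r ≤ i → Z r ω - Y r ω + S r ω - S i ω ≤ 0)
      ∧ (2 ≤ l →
          0 ≤ Z (τ (l - 1) ω).toNat ω - C (τ (l - 1) ω).toNat ω
            + S (τ (l - 1) ω).toNat ω - S i ω))
    ↔
    -- … are equivalent to the increment conditions on `ζ (i+1) = S (i+1) − S i`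
    (∀ᵐ ω ∂μ, ∀ i, i < J →
      (∀ l, 1 ≤ l → l ≤ L ω → τ (l - 1) ω < (i : ℤ) → (i : ℤ) < τ l ω →
        (∀ r : ℕ, τ (l - 1) ω < (r : ℤ) → r ≤ i →
          Z r ω - Y r ω + S r ω - S i ω ≤ S (i + 1) ω - S i ω)
        ∧ (2 ≤ l →
            S (i + 1) ω - S i ω ≤
              Z (τ (l - 1) ω).toNat ω - C (τ (l - 1) ω).toNat ω
                + S (τ (l - 1) ω).toNat ω - S i ω))
      ∧ (∀ l, 1 ≤ l → l ≤ L ω → τ l ω = (i : ℤ) →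
          S (i + 1) ω - S i ω ≤ Z i ω - C i ω)) := by
  constructor
  · intro hA
    filter_upwards [hA] with ω hA
    intro i hiJ
    constructor
    · intro l hl1 hlL h3 h4
      have hτJ := (hτrange ω l hl1 hlL).2
      have hi1J : i + 1 ≤ J := by omega
      obtain ⟨hc1, hc2⟩ := hA (i + 1) hi1J l hl1 hlL (by push_cast; omega)
        (by push_cast; omega)
      constructor
      · intro r hr1 hr2
        have := hc1 r hr1 (by omega)
        linarith
      · intro h2l
        have := hc2 h2l
        linarith
    · intro l hl1 hlL hτi
      have hlL' : l < L ω := by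
        rcases eq_or_lt_of_le hlL with h | h
        · exfalso
          rw [h, hτlast] at hτi
          omega
        · exact h
      have hmono := hτmono ω (l + 1) (by omega) (by omega)
      simp only [Nat.add_sub_cancel] at hmono
      obtain ⟨hc1, hc2⟩ := hA (i + 1) (by omega) (l + 1) (by omega) (by omega)
        (by simp only [Nat.add_sub_cancel]; rw [hτi]; push_cast; omega)
        (by rw [hτi] at hmono; push_cast; omega)
      have hc2' := hc2 (by omega)
      have ht : (τ ((l + 1) - 1) ω).toNat = i := by
        simp only [Nat.add_sub_cancel, hτi, Int.toNat_natCast]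
      rw [ht] at hc2'
      linarith
  · intro hB
    filter_upwards [hB] with ω hB
    intro i hiJ l hl1 hlL h3 h4
    have hτJ := (hτrange ω l hl1 hlL).2
    constructor
    · intro r hr1 hr2
      rcases eq_or_lt_of_le hr2 with rfl | hri
      · -- r = i : use Z i ≤ Y i
        have hZY : Z r ω ≤ Y r ω := by
          rcases eq_or_lt_of_le hiJ with rfl | hiJ'
          · rw [hYJ]
          · rw [hY r hiJ' ω]
            exact le_max_left _ _
        linarith
      · have hi1 : 1 ≤ i := by omega
        obtain ⟨g1, _⟩ := (hB (i - 1) (by omega)).1 l hl1 hlL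
          (by push_cast; omega) (by push_cast; omega)
        have := g1 r hr1 (by omega)
        have heq : i - 1 + 1 = i := by omega
        rw [heq] at this
        linarith
    · intro h2l
      have htpos : 0 ≤ τ (l - 1) ω := (hτrange ω (l - 1) (by omega) (by omega)).1
      have htZ : ((τ (l - 1) ω).toNat : ℤ) = τ (l - 1) ω := Int.toNat_of_nonneg htpos
      set t := (τ (l - 1) ω).toNat with htdef
      have hmono := hτmono ω l hl1 hlL
      by_cases hcase : i = t + 1
      · have := (hB t (by omega)).2 (l - 1) (by omega) (by omega) htZ.symm
        rw [hcase]
        linarith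
      · have hi2 : t + 2 ≤ i := by omega
        obtain ⟨_, g2⟩ := (hB (i - 1) (by omega)).1 l hl1 hlL
          (by push_cast; omega) (by push_cast; omega)
        have := g2 h2l
        have heq : i - 1 + 1 = i := by omega
        rw [heq] at this
        linarith
end

section
/- (Theorem 2, part (ii): characterization of M^{∘∘,0}.) Let S be a martingale with S_0 = 0 and let τ* be the first optimal stopping time. Then M := M* − S belongs to M^{∘∘,0} if and only if, almost surely: S_j = 0 on the event { j ≤ τ* } for every 0 ≤ j ≤ J, and S_j ≤ Y*_j − Z_j + A*_j on the event { τ* < j } for every 0 ≤ j ≤ J. -/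
/-!
By the Doob decomposition, `Z r - M r = Y 0 + S r - G r` with the gap `G r = Y r - Z r + A⋆ r`.
The gap is nonnegative, and it vanishes at `τ⋆`: before `τ⋆` the envelope equals its continuation
value, so `A⋆` has not grown yet. Hence `M` is surely optimal iff a.s. `S ≤ G` on `0, …, J` with
equality somewhere. If `S ≤ G`, then `S τ⋆ ≤ 0`; the stopped martingale `S^{τ⋆}` starts at `0`, so
it has mean zero, which forces `S τ⋆ = 0` and then `S (j ∧ τ⋆) = E[S τ⋆ | ℱ j] = 0`. Conversely
the two conditions give `S ≤ G` with equality at `τ⋆`.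
-/

open MeasureTheory Finset

namespace MeasureTheory

variable {Ω : Type*} {m : MeasurableSpace Ω} {μ : Measure Ω} {ℱ : Filtration ℕ m}

theorem isStoppingTime_of_isLeast {p : ℕ → Set Ω} {N : ℕ}
    (hp : ∀ n ≤ N, MeasurableSet[ℱ n] (p n)) {τ : Ω → ℕ} (hτN : ∀ ω, τ ω ≤ N)
    (hτ : ∀ ω, IsLeast {n | ω ∈ p n} (τ ω)) :
    IsStoppingTime ℱ (fun ω => (τ ω : WithTop ℕ)) := by
  intro n
  simp only [Nat.cast_withTop, WithTop.coe_le_coe]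
  have hset : {ω | τ ω ≤ n} = ⋃ i ≤ min n N, p i := by
    ext ω
    simp only [Set.mem_ofPred_eq, Set.mem_iUnion, exists_prop]
    constructor
    · exact fun h => ⟨τ ω, le_min h (hτN ω), (hτ ω).1⟩
    · rintro ⟨i, hi, hωi⟩
      exact ((hτ ω).2 hωi).trans (hi.trans (min_le_left _ _))
  rw [hset]
  exact MeasurableSet.biUnion (Set.to_countable _) fun i (hi : i ≤ min n N) =>
    ℱ.mono (hi.trans (min_le_left _ _)) _ (hp i (hi.trans (min_le_right _ _)))

protected theorem Martingale.stoppedProcess [SigmaFiniteFiltration μ ℱ] {f : ℕ → Ω → ℝ}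
    (hf : Martingale f ℱ μ) {τ : Ω → WithTop ℕ} (hτ : IsStoppingTime ℱ τ) :
    Martingale (stoppedProcess f τ) ℱ μ := by
  refine martingale_iff.mpr ⟨?_, hf.submartingale.stoppedProcess hτ⟩
  simpa [stoppedProcess_neg] using (hf.neg.submartingale.stoppedProcess hτ).neg

theorem Martingale.ae_eq_zero_of_nonpos [SigmaFiniteFiltration μ ℱ] {f : ℕ → Ω → ℝ}
    (hf : Martingale f ℱ μ) (h0 : f 0 =ᵐ[μ] 0) {N : ℕ} (hN : f N ≤ᵐ[μ] 0) {j : ℕ}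
    (hj : j ≤ N) : f j =ᵐ[μ] 0 := by
  have hint : ∫ ω, f N ω ∂μ = 0 := by
    rw [← integral_condExp (ℱ.le 0),
      integral_congr_ae ((hf.condExp_ae_eq (Nat.zero_le N)).trans h0)]
    simp
  have hfN : f N =ᵐ[μ] 0 := by
    have h := (integral_eq_zero_iff_of_nonneg_ae (f := -f N)
      (hN.mono fun ω hω => by simpa using hω) (hf.integrable N).neg).1
      (by rw [integral_neg', hint, neg_zero])
    exact h.mono fun ω hω => by simpa using hω
  calc f j =ᵐ[μ] μ[f N | ℱ j] := (hf.condExp_ae_eq hj).symm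
    _ =ᵐ[μ] μ[0 | ℱ j] := condExp_congr_ae hfN
    _ = 0 := condExp_zero

theorem Martingale.ae_eq_zero_of_stoppedValue_nonpos [SigmaFiniteFiltration μ ℱ]
    {f : ℕ → Ω → ℝ} (hf : Martingale f ℱ μ) (h0 : f 0 =ᵐ[μ] 0) {τ : Ω → ℕ}
    (hτ : IsStoppingTime ℱ (fun ω => (τ ω : WithTop ℕ))) {N : ℕ} (hτN : ∀ ω, τ ω ≤ N)
    (hfτ : ∀ᵐ ω ∂μ, f (τ ω) ω ≤ 0) : ∀ᵐ ω ∂μ, ∀ j ≤ N, j ≤ τ ω → f j ω = 0 := by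
  set g := stoppedProcess f (fun ω => (τ ω : WithTop ℕ))
  have hg_le {j : ℕ} {ω : Ω} (hj : j ≤ τ ω) : g j ω = f j ω :=
    stoppedProcess_eq_of_le (WithTop.coe_le_coe.2 hj)
  have hg : ∀ j ≤ N, g j =ᵐ[μ] 0 := fun j hj =>
    (hf.stoppedProcess hτ).ae_eq_zero_of_nonpos
      (h0.mono fun ω hω => (hg_le (Nat.zero_le _)).trans hω)
      (hfτ.mono fun ω hω => (stoppedProcess_eq_of_ge (τ := fun ω => (τ ω : WithTop ℕ))
        (WithTop.coe_le_coe.2 (hτN ω))).trans_le hω) hj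
  filter_upwards [(ae_ball_iff (Set.to_countable (Set.Iic N))).2 hg] with ω hω j hj hjτ
  exact (hg_le hjτ).symm.trans (hω j hj)

end MeasureTheory

theorem Finset.sup'_eq_iff {α β : Type*} [LinearOrder α] {s : Finset β} (H : s.Nonempty)
    {f : β → α} {a : α} : s.sup' H f = a ↔ (∀ b ∈ s, f b ≤ a) ∧ ∃ b ∈ s, f b = a := by
  refine ⟨fun h => ⟨fun b hb => h ▸ le_sup' f hb, ?_⟩, fun ⟨hle, b, hb, hfb⟩ =>
    le_antisymm (sup'_le H f hle) (hfb ▸ le_sup' f hb)⟩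
  obtain ⟨b, hb, hfb⟩ := exists_mem_eq_sup' H f
  exact ⟨b, hb, hfb ▸ h⟩

theorem Finset.sum_range_succ_sub_sub_sum_range_sub {G : Type*} [AddCommGroup G] (y c : ℕ → G)
    (j : ℕ) :
    ∑ l ∈ range j, (y (l + 1) - c l) - ∑ l ∈ range j, (y l - c l) = y j - y 0 := by
  rw [← sum_sub_distrib]
  simp_rw [sub_sub_sub_cancel_right]
  exact sum_range_sub y j

section SnellRecursion

variable {z y c : ℕ → ℝ} {J : ℕ}

theorem snell_gap_nonneg (hyJ : y J = z J) (hy : ∀ j < J, y j = max (z j) (c j)) {r : ℕ}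
    (hr : r ≤ J) : 0 ≤ y r - z r + ∑ l ∈ range r, (y l - c l) := by
  have hz : z r ≤ y r := by
    rcases hr.lt_or_eq with hr | rfl
    · exact (hy r hr).symm ▸ le_max_left _ _
    · exact hyJ.ge
  have hA : 0 ≤ ∑ l ∈ range r, (y l - c l) := sum_nonneg fun l hl =>
    sub_nonneg.2 ((hy l ((mem_range.1 hl).trans_le hr)).symm ▸ le_max_right _ _)
  linarith

theorem snell_gap_eq_zero (hyJ : y J = z J) (hy : ∀ j < J, y j = max (z j) (c j)) {t : ℕ}
    (ht : t ≤ J) (hcont : ∀ i < t, z i ≤ c i) (hstop : t < J → c t ≤ z t) :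
    y t - z t + ∑ l ∈ range t, (y l - c l) = 0 := by
  have hyt : y t = z t := by
    rcases ht.lt_or_eq with ht | rfl
    · rw [hy t ht, max_eq_left (hstop ht)]
    · exact hyJ
  have hA : ∑ l ∈ range t, (y l - c l) = 0 := sum_eq_zero fun l hl => by
    rw [hy l ((mem_range.1 hl).trans_le ht), max_eq_right (hcont l (mem_range.1 hl)), sub_self]
  rw [hyt, hA, sub_self, add_zero]

end SnellRecursion

theorem mem_surely_optimal_at_zero_iff_general
    {Ω : Type*} {mΩ : MeasurableSpace Ω} {μ : Measure Ω} [IsProbabilityMeasure μ]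
    (J : ℕ) (ℱ : Filtration ℕ mΩ)
    (Z Y Mstar Astar : ℕ → Ω → ℝ)
    (hZ_adapted : Adapted ℱ Z)
    (hYJ : ∀ ω, Y J ω = Z J ω)
    (hY : ∀ j, j < J → ∀ ω, Y j ω = max (Z j ω) ((μ[Y (j + 1) | ℱ j]) ω))
    (hMstar : ∀ j ω, Mstar j ω =
      ∑ l ∈ Finset.range j, (Y (l + 1) ω - (μ[Y (l + 1) | ℱ l]) ω))
    (hAstar : ∀ j ω, Astar j ω =
      ∑ l ∈ Finset.range j, (Y l ω - (μ[Y (l + 1) | ℱ l]) ω))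
    -- the continuation value `C i = E[Y (i+1) | ℱ i]`, with the convention `Y (J+1) := 0`
    (C : ℕ → Ω → ℝ)
    (hC : ∀ i, i < J → C i = μ[Y (i + 1) | ℱ i])
    (hCJ : ∀ ω, C J ω = 0)
    -- the first optimal stopping time `τ⋆ = inf{ i ≥ 0 : Z i ≥ E[Y (i+1) | ℱ i] }`
    (τs : Ω → ℕ)
    (hτs : ∀ ω, τs ω ≤ J ∧ C (τs ω) ω ≤ Z (τs ω) ω ∧ ∀ i, i < τs ω → Z i ω < C i ω)
    -- the martingale shift `S` and the shifted Doob martingale `M = M⋆ − S`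
    (S M : ℕ → Ω → ℝ)
    (hS : Martingale S ℱ μ)
    (hS0 : ∀ ω, S 0 ω = 0)
    (hMdef : ∀ j ω, M j ω = Mstar j ω - S j ω) :
    (∀ᵐ ω ∂μ, Y 0 ω = (Finset.Icc 0 J).sup' (Finset.nonempty_Icc.mpr (Nat.zero_le J))
        (fun r => Z r ω - M r ω))
    ↔
    (∀ᵐ ω ∂μ,
      (∀ j, j ≤ J → j ≤ τs ω → S j ω = 0)
      ∧ (∀ j, j ≤ J → τs ω < j → S j ω ≤ Y j ω - Z j ω + Astar j ω)) := by
  have hy ω : ∀ j < J, Y j ω = max (Z j ω) ((μ[Y (j + 1) | ℱ j]) ω) := fun j hj => hY j hj ω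
  have hgap_nonneg ω r (hr : r ≤ J) : 0 ≤ Y r ω - Z r ω + Astar r ω :=
    hAstar r ω ▸ snell_gap_nonneg (hYJ ω) (hy ω) hr
  have hgap_τs ω : Y (τs ω) ω - Z (τs ω) ω + Astar (τs ω) ω = 0 :=
    hAstar (τs ω) ω ▸ snell_gap_eq_zero (hYJ ω) (hy ω) (hτs ω).1
      (fun i hi => hC i (hi.trans_le (hτs ω).1) ▸ ((hτs ω).2.2 i hi).le)
      (fun h => hC _ h ▸ (hτs ω).2.1)
  have hpath r ω : Z r ω - M r ω = Y 0 ω + (S r ω - (Y r ω - Z r ω + Astar r ω)) := by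
    have := sum_range_succ_sub_sub_sum_range_sub (Y · ω) (fun l => (μ[Y (l + 1) | ℱ l]) ω) r
    rw [hMdef, hMstar, hAstar]
    linarith
  have hτs_stop : IsStoppingTime ℱ (fun ω => (τs ω : WithTop ℕ)) := by
    have hC_meas n (hn : n ≤ J) : StronglyMeasurable[ℱ n] (C n) := by
      rcases hn.lt_or_eq with hn | rfl
      · exact hC n hn ▸ stronglyMeasurable_condExp
      · exact (funext hCJ : C n = 0) ▸ stronglyMeasurable_const
    exact isStoppingTime_of_isLeast (p := fun n => {ω | C n ω ≤ Z n ω})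
      (fun n hn => (hC_meas n hn).measurableSet_le (hZ_adapted n).stronglyMeasurable)
      (fun ω => (hτs ω).1)
      fun ω => ⟨(hτs ω).2.1, fun i hi => not_lt.1 fun h => ((hτs ω).2.2 i h).not_ge hi⟩
  have hopt ω : Y 0 ω = (Icc 0 J).sup' (nonempty_Icc.mpr (Nat.zero_le J))
      (fun r => Z r ω - M r ω) ↔ (∀ r ≤ J, S r ω ≤ Y r ω - Z r ω + Astar r ω) ∧
        ∃ r ≤ J, S r ω = Y r ω - Z r ω + Astar r ω := by
    rw [eq_comm, sup'_eq_iff]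
    simp only [mem_Icc, Nat.zero_le, true_and, hpath, add_le_iff_nonpos_right, sub_nonpos,
      add_eq_left, sub_eq_zero]
  simp only [hopt]
  constructor
  · intro h
    filter_upwards [h, hS.ae_eq_zero_of_stoppedValue_nonpos (ae_of_all _ hS0) hτs_stop
      (fun ω => (hτs ω).1) (h.mono fun ω hω => (hω.1 _ (hτs ω).1).trans_eq (hgap_τs ω))]
      with ω hω hS_zero
    exact ⟨hS_zero, fun j hj _ => hω.1 j hj⟩
  · intro h
    filter_upwards [h] with ω ⟨hS_zero, hS_le⟩
    refine ⟨fun r hr => ?_, τs ω, (hτs ω).1, by rw [hgap_τs, hS_zero _ (hτs ω).1 le_rfl]⟩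
    rcases le_or_gt r (τs ω) with hrτ | hrτ
    · exact hS_zero r hr hrτ ▸ hgap_nonneg ω r hr
    · exact hS_le r hr hrτ

/-- **Theorem 2, part (ii): characterization of `M^{∘∘,0}`.** Let `S` be a martingale with
`S 0 = 0`, let `τ⋆` be the first optimal stopping time, and set `M := M⋆ − S`. Then `M` is
surely optimal at `0` if and only if, almost surely: `S j = 0` on the event `{j ≤ τ⋆}` for
every `0 ≤ j ≤ J`, and `S j ≤ Y j − Z j + A⋆ j` on the event `{τ⋆ < j}` for every
`0 ≤ j ≤ J`. -/
theorem mem_surely_optimal_at_zero_iff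
    {Ω : Type*} {mΩ : MeasurableSpace Ω} {μ : Measure Ω} [IsProbabilityMeasure μ]
    (J : ℕ) (ℱ : Filtration ℕ mΩ)
    (Z Y Mstar Astar : ℕ → Ω → ℝ)
    (hZ_adapted : Adapted ℱ Z)
    (hZ_int : ∀ j, Integrable (Z j) μ)
    (hYJ : ∀ ω, Y J ω = Z J ω)
    (hY : ∀ j, j < J → ∀ ω, Y j ω = max (Z j ω) ((μ[Y (j + 1) | ℱ j]) ω))
    (hMstar : ∀ j ω, Mstar j ω =
      ∑ l ∈ Finset.range j, (Y (l + 1) ω - (μ[Y (l + 1) | ℱ l]) ω))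
    (hAstar : ∀ j ω, Astar j ω =
      ∑ l ∈ Finset.range j, (Y l ω - (μ[Y (l + 1) | ℱ l]) ω))
    -- the continuation value `C i = E[Y (i+1) | ℱ i]`, with the convention `Y (J+1) := 0`
    (C : ℕ → Ω → ℝ)
    (hC : ∀ i, i < J → C i = μ[Y (i + 1) | ℱ i])
    (hCJ : ∀ ω, C J ω = 0)
    -- the first optimal stopping time `τ⋆ = inf{ i ≥ 0 : Z i ≥ E[Y (i+1) | ℱ i] }`
    (τs : Ω → ℕ)
    (hτs : ∀ ω, τs ω ≤ J ∧ C (τs ω) ω ≤ Z (τs ω) ω ∧ ∀ i, i < τs ω → Z i ω < C i ω)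
    -- the martingale shift `S` and the shifted Doob martingale `M = M⋆ − S`
    (S M : ℕ → Ω → ℝ)
    (hS : Martingale S ℱ μ)
    (hS0 : ∀ ω, S 0 ω = 0)
    (hMdef : ∀ j ω, M j ω = Mstar j ω - S j ω) :
    (∀ᵐ ω ∂μ, Y 0 ω = (Finset.Icc 0 J).sup' (Finset.nonempty_Icc.mpr (Nat.zero_le J))
        (fun r => Z r ω - M r ω))
    ↔
    (∀ᵐ ω ∂μ,
      (∀ j, j ≤ J → j ≤ τs ω → S j ω = 0)
      ∧ (∀ j, j ≤ J → τs ω < j → S j ω ≤ Y j ω - Z j ω + Astar j ω)) :=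
  mem_surely_optimal_at_zero_iff_general J ℱ Z Y Mstar Astar hZ_adapted hYJ hY hMstar hAstar C hC
    hCJ τs hτs S M hS hS0 hMdef
end

section
/- (Corollary 4, part (i): sufficient increment conditions for weak optimality at 0.) Let S be a martingale with S_0 = 0 and increments ζ_j := S_j − S_{j−1}, and let τ* be the first optimal stopping time. If, almost surely, ζ_j ≥ max_{0 ≤ r < j} ( Z_r − Y*_r − S_{j−1} + S_r ) on the event { j ≤ τ* } for every 1 ≤ j ≤ J, and ζ_j ≤ A*_j + S_{τ*} − S_{j−1} on the event { τ* < j } for every 1 ≤ j ≤ J, then M := M* − S ∈ M^{∘,0}. (The right-hand sides of these bounds are F_{j−1}-measurable.) -/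
open MeasureTheory Finset

/-! Since `M⋆ = Y - Y 0 + A⋆`, the path `Z r - M r` equals `Y 0 + (Z r - Y r) - A⋆ r + S r`.
At `r = τ⋆` we have `Y = Z` and `A⋆ = 0`, so the term is `Y 0 + S τ⋆`. For `r < τ⋆` the compensator
still vanishes and the lower bound on the increment at `τ⋆` caps the term by `Y 0 + S τ⋆`; for
`r > τ⋆` the upper bound on the increment at `r` does the same, since `Z ≤ Y`. So the pathwise
maximum is `Y 0 + S τ⋆`, and optional sampling gives `E[S τ⋆ | ℱ 0] = S 0 = 0`. -/

section SnellRecursion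

variable {z y c : ℕ → ℝ} {J : ℕ}

theorem le_of_snell_recursion (hyJ : y J = z J) (hy : ∀ j < J, y j = max (z j) (c j))
    {r : ℕ} (hr : r ≤ J) : z r ≤ y r := by
  rcases hr.lt_or_eq with hr | rfl
  · exact (hy r hr).symm ▸ le_max_left _ _
  · exact hyJ.ge

theorem sum_range_sub_eq_zero_of_snell_recursion (hy : ∀ j < J, y j = max (z j) (c j))
    {τ r : ℕ} (hτJ : τ ≤ J) (hcont : ∀ i < τ, z i < c i) (hr : r ≤ τ) :
    ∑ l ∈ range r, (y l - c l) = 0 :=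
  sum_eq_zero fun l hl => by
    have hlτ : l < τ := (mem_range.1 hl).trans_le hr
    rw [hy l (hlτ.trans_le hτJ), max_eq_right (hcont l hlτ).le, sub_self]

theorem eq_of_snell_recursion_of_stop (hyJ : y J = z J) (hy : ∀ j < J, y j = max (z j) (c j))
    {τ : ℕ} (hτJ : τ ≤ J) (hstop : τ < J → c τ ≤ z τ) : y τ = z τ := by
  rcases hτJ.lt_or_eq with hτ | rfl
  · rw [hy τ hτ, max_eq_left (hstop hτ)]
  · exact hyJ

theorem sup'_sub_doob_eq_of_increment_conditions (hyJ : y J = z J)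
    (hy : ∀ j < J, y j = max (z j) (c j)) {s : ℕ → ℝ} {τ : ℕ} (hτJ : τ ≤ J)
    (hstop : τ < J → c τ ≤ z τ) (hcont : ∀ i < τ, z i < c i)
    (hbefore : ∀ r < τ, z r - y r + s r ≤ s τ)
    (hafter : ∀ j, τ < j → j ≤ J → s j ≤ ∑ l ∈ range j, (y l - c l) + s τ) :
    (Icc 0 J).sup' (nonempty_Icc.2 (Nat.zero_le J))
      (fun r => z r - (∑ l ∈ range r, (y (l + 1) - c l) - s r)) = y 0 + s τ := by
  have htelescope : ∀ r, ∑ l ∈ range r, (y (l + 1) - c l) =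
      y r - y 0 + ∑ l ∈ range r, (y l - c l) := fun r => by
    rw [← sum_range_sub, ← sum_add_distrib]
    exact sum_congr rfl fun _ _ => by ring
  have hτ_term : z τ - (∑ l ∈ range τ, (y (l + 1) - c l) - s τ) = y 0 + s τ := by
    rw [htelescope, sum_range_sub_eq_zero_of_snell_recursion hy hτJ hcont le_rfl,
      eq_of_snell_recursion_of_stop hyJ hy hτJ hstop]
    ring
  refine le_antisymm (sup'_le _ _ fun r hr => ?_)
    (hτ_term ▸ le_sup' (fun r => z r - (∑ l ∈ range r, (y (l + 1) - c l) - s r))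
      (mem_Icc.2 ⟨Nat.zero_le τ, hτJ⟩))
  have hrJ := (mem_Icc.1 hr).2
  rw [htelescope]
  rcases lt_trichotomy r τ with hr | rfl | hr
  · have := sum_range_sub_eq_zero_of_snell_recursion hy hτJ hcont hr.le
    linarith [hbefore r hr]
  · linarith [hτ_term, htelescope r]
  · linarith [hafter r hr hrJ, le_of_snell_recursion hyJ hy hrJ]

end SnellRecursion

section Probability

variable {Ω : Type*} {m : MeasurableSpace Ω} {μ : Measure Ω}

theorem measurable_and_integrable_of_snell_recursion {ℱ : Filtration ℕ m} {Z Y : ℕ → Ω → ℝ}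
    {J : ℕ} (hZ_adapted : Adapted ℱ Z) (hZ_int : ∀ j, Integrable (Z j) μ)
    (hYJ : ∀ ω, Y J ω = Z J ω) (hY : ∀ j, j < J → ∀ ω, Y j ω = max (Z j ω) ((μ[Y (j + 1) | ℱ j]) ω))
    {j : ℕ} (hj : j ≤ J) : Measurable[ℱ j] (Y j) ∧ Integrable (Y j) μ := by
  induction hj using Nat.decreasingInduction with
  | self => exact funext hYJ ▸ ⟨hZ_adapted J, hZ_int J⟩
  | of_succ j hj _ =>
    rw [show Y j = Z j ⊔ μ[Y (j + 1) | ℱ j] from funext (hY j hj)]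
    exact ⟨(hZ_adapted j).sup stronglyMeasurable_condExp.measurable,
      (hZ_int j).sup integrable_condExp⟩

theorem isStoppingTime_of_first_entry {ℱ : Filtration ℕ m} {P : ℕ → Set Ω} {N : ℕ}
    (hP : ∀ i < N, MeasurableSet[ℱ i] (P i)) {τ : Ω → ℕ} (hτN : ∀ ω, τ ω ≤ N)
    (hmem : ∀ ω, τ ω < N → ω ∈ P (τ ω)) (hmin : ∀ ω, ∀ i < τ ω, ω ∉ P i) :
    IsStoppingTime ℱ (fun ω => (τ ω : WithTop ℕ)) := by
  intro n
  change MeasurableSet[ℱ n] {ω | (τ ω : WithTop ℕ) ≤ (n : WithTop ℕ)}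
  rcases le_or_gt N n with hNn | hnN
  · simp [fun ω => (hτN ω).trans hNn]
  · have hset : {ω | (τ ω : WithTop ℕ) ≤ n} = ⋃ i ∈ range (n + 1), P i := by
      ext ω
      simp only [Set.mem_ofPred_eq, Nat.cast_le, Set.mem_iUnion, mem_range, exists_prop]
      refine ⟨fun h => ⟨τ ω, by omega, hmem ω (by omega)⟩, fun ⟨i, hi, hωi⟩ => ?_⟩
      by_contra! h
      exact hmin ω i (by omega) hωi
    rw [hset]
    refine (range (n + 1)).measurableSet_biUnion fun i hi => ?_
    have hin : i ≤ n := Nat.lt_succ_iff.1 (mem_range.1 hi)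
    exact ℱ.mono hin _ (hP i (hin.trans_lt hnN))

theorem MeasureTheory.Martingale.condExp_stoppedValue_ae_eq_of_le {E : Type*} [NormedAddCommGroup E]
    [NormedSpace ℝ E] [CompleteSpace E] [IsFiniteMeasure μ] {ℱ : Filtration ℕ m}
    {f : ℕ → Ω → E} (hf : Martingale f ℱ μ) {τ : Ω → WithTop ℕ} (hτ : IsStoppingTime ℱ τ)
    {i n : ℕ} (hiτ : ∀ ω, i ≤ τ ω) (hτn : ∀ ω, τ ω ≤ n) :
    μ[stoppedValue f τ | ℱ i] =ᵐ[μ] f i := by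
  rcases isEmpty_or_nonempty Ω with _ | ⟨⟨ω⟩⟩
  · exact .of_forall isEmptyElim
  calc μ[stoppedValue f τ | ℱ i]
      =ᵐ[μ] μ[μ[f n | hτ.measurableSpace] | ℱ i] :=
        condExp_congr_ae (hf.stoppedValue_ae_eq_condExp_of_le_const hτ hτn)
    _ =ᵐ[μ] μ[f n | ℱ i] :=
        condExp_condExp_of_le (hτ.le_measurableSpace_of_const_le hiτ)
          (hτ.measurableSpace_le_of_le hτn)
    _ =ᵐ[μ] f i := hf.condExp_ae_eq (by exact_mod_cast (hiτ ω).trans (hτn ω))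

end Probability

theorem weakly_optimal_at_zero_of_increment_conditions_general
    {Ω : Type*} {mΩ : MeasurableSpace Ω} {μ : Measure Ω} [IsProbabilityMeasure μ]
    (J : ℕ) (ℱ : Filtration ℕ mΩ)
    (Z Y Mstar Astar : ℕ → Ω → ℝ)
    (hZ_adapted : Adapted ℱ Z)
    (hZ_int : ∀ j, Integrable (Z j) μ)
    (hYJ : ∀ ω, Y J ω = Z J ω)
    (hY : ∀ j, j < J → ∀ ω, Y j ω = max (Z j ω) ((μ[Y (j + 1) | ℱ j]) ω))
    (hMstar : ∀ j ω, Mstar j ω =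
      ∑ l ∈ Finset.range j, (Y (l + 1) ω - (μ[Y (l + 1) | ℱ l]) ω))
    (hAstar : ∀ j ω, Astar j ω =
      ∑ l ∈ Finset.range j, (Y l ω - (μ[Y (l + 1) | ℱ l]) ω))
    -- the continuation value `C i = E[Y (i+1) | ℱ i]`, with the convention `Y (J+1) := 0`
    (C : ℕ → Ω → ℝ)
    (hC : ∀ i, i < J → C i = μ[Y (i + 1) | ℱ i])
    -- the first optimal stopping time `τ⋆ = inf{ i ≥ 0 : Z i ≥ E[Y (i+1) | ℱ i] }`
    (τs : Ω → ℕ)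
    (hτs : ∀ ω, τs ω ≤ J ∧ C (τs ω) ω ≤ Z (τs ω) ω ∧ ∀ i, i < τs ω → Z i ω < C i ω)
    -- the martingale shift `S` and the shifted Doob martingale `M = M⋆ − S`
    (S M : ℕ → Ω → ℝ)
    (hS : Martingale S ℱ μ)
    (hS0 : ∀ ω, S 0 ω = 0)
    (hMdef : ∀ j ω, M j ω = Mstar j ω - S j ω)
    -- the increment conditions on `ζ j = S j − S (j−1)`
    (hζ : ∀ᵐ ω ∂μ, ∀ j, 1 ≤ j → j ≤ J →
      (j ≤ τs ω → ∀ r, r < j →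
        Z r ω - Y r ω - S (j - 1) ω + S r ω ≤ S j ω - S (j - 1) ω)
      ∧ (τs ω < j →
        S j ω - S (j - 1) ω ≤ Astar j ω + S (τs ω) ω - S (j - 1) ω)) :
    Y 0 =ᵐ[μ] μ[fun ω => (Finset.Icc 0 J).sup' (Finset.nonempty_Icc.mpr (Nat.zero_le J))
        (fun r => Z r ω - M r ω) | ℱ 0] := by
  have hτJ : ∀ ω, τs ω ≤ J := fun ω => (hτs ω).1
  have hY0 := measurable_and_integrable_of_snell_recursion hZ_adapted hZ_int hYJ hY (Nat.zero_le J)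
  have hτ : IsStoppingTime ℱ (fun ω => (τs ω : WithTop ℕ)) :=
    isStoppingTime_of_first_entry (P := fun i => {ω | C i ω ≤ Z i ω})
      (fun i hi => measurableSet_le ((hC i hi).symm ▸ stronglyMeasurable_condExp.measurable)
        (hZ_adapted i))
      hτJ (fun ω _ => (hτs ω).2.1) (fun ω i hi => not_le.2 ((hτs ω).2.2 i hi))
  have hsup : (fun ω => (Icc 0 J).sup' (nonempty_Icc.2 (Nat.zero_le J))
      (fun r => Z r ω - M r ω)) =ᵐ[μ] Y 0 + stoppedValue S (fun ω => (τs ω : WithTop ℕ)) := by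
    filter_upwards [hζ] with ω hω
    change _ = Y 0 ω + S (τs ω) ω
    have hC_eq : ∀ i < J, C i ω = (μ[Y (i + 1) | ℱ i]) ω := fun i hi => congrFun (hC i hi) ω
    simp only [hMdef, hMstar]
    refine sup'_sub_doob_eq_of_increment_conditions (τ := τs ω) (hYJ ω) (fun j hj => hY j hj ω)
      (hτJ ω) (fun h => hC_eq _ h ▸ (hτs ω).2.1)
      (fun i hi => hC_eq i (hi.trans_le (hτJ ω)) ▸ (hτs ω).2.2 i hi)
      (fun r hr => by linarith [(hω (τs ω) (by omega) (hτJ ω)).1 le_rfl r hr])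
      (fun j hj hjJ => by linarith [hAstar j ω ▸ (hω j (by omega) hjJ).2 hj])
  have hτJ' : ∀ ω, (τs ω : WithTop ℕ) ≤ J := fun ω => Nat.cast_le.2 (hτJ ω)
  filter_upwards [condExp_congr_ae hsup,
    condExp_add hY0.2 (integrable_stoppedValue ℕ hτ hS.integrable hτJ') (ℱ 0),
    hS.condExp_stoppedValue_ae_eq_of_le hτ (i := 0) (fun _ => bot_le) hτJ'] with ω hsup_ω hadd hSτ
  rw [hsup_ω, hadd, Pi.add_apply, hSτ, hS0, add_zero,
    condExp_of_stronglyMeasurable (ℱ.le 0) hY0.1.stronglyMeasurable hY0.2]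

/-- **Corollary 4, part (i): sufficient increment conditions for weak optimality at 0.**
Let `S` be a martingale with `S 0 = 0` and increments `ζ j := S j − S (j−1)`, and let `τ⋆` be
the first optimal stopping time. If, almost surely,
`ζ j ≥ max_{0 ≤ r < j} (Z r − Y r − S (j−1) + S r)` on the event `{j ≤ τ⋆}` for every
`1 ≤ j ≤ J`, and `ζ j ≤ A⋆ j + S τ⋆ − S (j−1)` on the event `{τ⋆ < j}` for every `1 ≤ j ≤ J`,
then `M := M⋆ − S` is weakly optimal at `0`. -/
theorem weakly_optimal_at_zero_of_increment_conditions
    {Ω : Type*} {mΩ : MeasurableSpace Ω} {μ : Measure Ω} [IsProbabilityMeasure μ]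
    (J : ℕ) (ℱ : Filtration ℕ mΩ)
    (Z Y Mstar Astar : ℕ → Ω → ℝ)
    (hZ_adapted : Adapted ℱ Z)
    (hZ_int : ∀ j, Integrable (Z j) μ)
    (hYJ : ∀ ω, Y J ω = Z J ω)
    (hY : ∀ j, j < J → ∀ ω, Y j ω = max (Z j ω) ((μ[Y (j + 1) | ℱ j]) ω))
    (hMstar : ∀ j ω, Mstar j ω =
      ∑ l ∈ Finset.range j, (Y (l + 1) ω - (μ[Y (l + 1) | ℱ l]) ω))
    (hAstar : ∀ j ω, Astar j ω =
      ∑ l ∈ Finset.range j, (Y l ω - (μ[Y (l + 1) | ℱ l]) ω))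
    -- the continuation value `C i = E[Y (i+1) | ℱ i]`, with the convention `Y (J+1) := 0`
    (C : ℕ → Ω → ℝ)
    (hC : ∀ i, i < J → C i = μ[Y (i + 1) | ℱ i])
    (hCJ : ∀ ω, C J ω = 0)
    -- the first optimal stopping time `τ⋆ = inf{ i ≥ 0 : Z i ≥ E[Y (i+1) | ℱ i] }`
    (τs : Ω → ℕ)
    (hτs : ∀ ω, τs ω ≤ J ∧ C (τs ω) ω ≤ Z (τs ω) ω ∧ ∀ i, i < τs ω → Z i ω < C i ω)
    -- the martingale shift `S` and the shifted Doob martingale `M = M⋆ − S`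
    (S M : ℕ → Ω → ℝ)
    (hS : Martingale S ℱ μ)
    (hS0 : ∀ ω, S 0 ω = 0)
    (hMdef : ∀ j ω, M j ω = Mstar j ω - S j ω)
    -- the increment conditions on `ζ j = S j − S (j−1)`
    (hζ : ∀ᵐ ω ∂μ, ∀ j, 1 ≤ j → j ≤ J →
      (j ≤ τs ω → ∀ r, r < j →
        Z r ω - Y r ω - S (j - 1) ω + S r ω ≤ S j ω - S (j - 1) ω)
      ∧ (τs ω < j →
        S j ω - S (j - 1) ω ≤ Astar j ω + S (τs ω) ω - S (j - 1) ω)) :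
    Y 0 =ᵐ[μ] μ[fun ω => (Finset.Icc 0 J).sup' (Finset.nonempty_Icc.mpr (Nat.zero_le J))
        (fun r => Z r ω - M r ω) | ℱ 0] :=
  weakly_optimal_at_zero_of_increment_conditions_general J ℱ Z Y Mstar Astar hZ_adapted hZ_int hYJ
    hY hMstar hAstar C hC τs hτs S M hS hS0 hMdef hζ
end

section
/- (Corollary 4, part (ii): sufficient increment conditions for sure optimality at 0.) Let S be a martingale with S_0 = 0 and increments ζ_j := S_j − S_{j−1}, and let τ* be the first optimal stopping time. If, almost surely, ζ_j = 0 on the event { j ≤ τ* } for every 1 ≤ j ≤ J, and ζ_j ≤ A*_j − S_{j−1} on the event { τ* < j } for every 1 ≤ j ≤ J, then M := M* − S ∈ M^{∘∘,0}. (The right-hand side of the bound is F_{j−1}-measurable.) -/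
open MeasureTheory Finset

/-- **Corollary 4, part (ii): sufficient increment conditions for sure optimality at 0.**
Let `S` be a martingale with `S 0 = 0` and increments `ζ j := S j − S (j−1)`, and let `τ⋆` be
the first optimal stopping time. If, almost surely, `ζ j = 0` on the event `{j ≤ τ⋆}` for
every `1 ≤ j ≤ J`, and `ζ j ≤ A⋆ j − S (j−1)` on the event `{τ⋆ < j}` for every `1 ≤ j ≤ J`,
then `M := M⋆ − S` is surely optimal at `0`. -/
theorem surely_optimal_at_zero_of_increment_conditions
    {Ω : Type*} {mΩ : MeasurableSpace Ω} {μ : Measure Ω} [IsProbabilityMeasure μ]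
    (J : ℕ) (ℱ : Filtration ℕ mΩ)
    (Z Y Mstar Astar : ℕ → Ω → ℝ)
    (hZ_adapted : Adapted ℱ Z)
    (hZ_int : ∀ j, Integrable (Z j) μ)
    (hYJ : ∀ ω, Y J ω = Z J ω)
    (hY : ∀ j, j < J → ∀ ω, Y j ω = max (Z j ω) ((μ[Y (j + 1) | ℱ j]) ω))
    (hMstar : ∀ j ω, Mstar j ω =
      ∑ l ∈ Finset.range j, (Y (l + 1) ω - (μ[Y (l + 1) | ℱ l]) ω))
    (hAstar : ∀ j ω, Astar j ω =
      ∑ l ∈ Finset.range j, (Y l ω - (μ[Y (l + 1) | ℱ l]) ω))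
    -- the continuation value `C i = E[Y (i+1) | ℱ i]`, with the convention `Y (J+1) := 0`
    (C : ℕ → Ω → ℝ)
    (hC : ∀ i, i < J → C i = μ[Y (i + 1) | ℱ i])
    (hCJ : ∀ ω, C J ω = 0)
    -- the first optimal stopping time `τ⋆ = inf{ i ≥ 0 : Z i ≥ E[Y (i+1) | ℱ i] }`
    (τs : Ω → ℕ)
    (hτs : ∀ ω, τs ω ≤ J ∧ C (τs ω) ω ≤ Z (τs ω) ω ∧ ∀ i, i < τs ω → Z i ω < C i ω)
    -- the martingale shift `S` and the shifted Doob martingale `M = M⋆ − S`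
    (S M : ℕ → Ω → ℝ)
    (hS : Martingale S ℱ μ)
    (hS0 : ∀ ω, S 0 ω = 0)
    (hMdef : ∀ j ω, M j ω = Mstar j ω - S j ω)
    -- the increment conditions on `ζ j = S j − S (j−1)`
    (hζ : ∀ᵐ ω ∂μ, ∀ j, 1 ≤ j → j ≤ J →
      (j ≤ τs ω → S j ω - S (j - 1) ω = 0)
      ∧ (τs ω < j → S j ω - S (j - 1) ω ≤ Astar j ω - S (j - 1) ω)) :
    ∀ᵐ ω ∂μ, Y 0 ω = (Finset.Icc 0 J).sup' (Finset.nonempty_Icc.mpr (Nat.zero_le J))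
        (fun r => Z r ω - M r ω) := by
  filter_upwards [hζ] with ω hω
  -- Doob decomposition: Mstar j - Astar j = Y j - Y 0
  have doob : ∀ j, Mstar j ω - Astar j ω = Y j ω - Y 0 ω := by
    intro j
    rw [hMstar, hAstar, ← Finset.sum_sub_distrib]
    have : ∀ l ∈ Finset.range j,
        (Y (l + 1) ω - (μ[Y (l + 1) | ℱ l]) ω) - (Y l ω - (μ[Y (l + 1) | ℱ l]) ω)
        = Y (l + 1) ω - Y l ω := by intro l _; ring
    rw [Finset.sum_congr rfl this, Finset.sum_range_sub (fun l => Y l ω)]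
  -- S vanishes up to τs
  have Szero : ∀ j, j ≤ τs ω → S j ω = 0 := by
    intro j
    induction j with
    | zero => intro _; exact hS0 ω
    | succ k ih =>
      intro hk
      have hkτ : k ≤ τs ω := Nat.le_of_succ_le hk
      have hkJ : k + 1 ≤ J := le_trans hk (hτs ω).1
      have := (hω (k + 1) (Nat.succ_le_succ (Nat.zero_le k)) hkJ).1 hk
      simp only [Nat.add_sub_cancel] at this
      have hSk := ih hkτ
      linarith
  -- Z ≤ Y up to J
  have ZleY : ∀ r, r ≤ J → Z r ω ≤ Y r ω := by
    intro r hr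
    rcases eq_or_lt_of_le hr with h | h
    · rw [h, hYJ]
    · rw [hY r h ω]; exact le_max_left _ _
  -- S ≤ Astar up to J
  have SleA : ∀ r, r ≤ J → S r ω ≤ Astar r ω := by
    intro r hr
    rcases le_or_gt r (τs ω) with h | h
    · rw [Szero r h, hAstar]
      apply Finset.sum_nonneg
      intro l hl
      have hlJ : l < J := lt_of_lt_of_le (Finset.mem_range.mp hl) hr
      rw [hY l hlJ ω]
      have := le_max_right (Z l ω) ((μ[Y (l + 1) | ℱ l]) ω)
      linarith
    · have hr1 : 1 ≤ r := Nat.one_le_iff_ne_zero.mpr (by omega)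
      have := (hω r hr1 hr).2 h
      linarith
  set t := τs ω with ht
  have htJ : t ≤ J := (hτs ω).1
  -- Y t = Z t
  have YZt : Y t ω = Z t ω := by
    rcases eq_or_lt_of_le htJ with h | h
    · rw [h, hYJ]
    · rw [hY t h ω, max_eq_left]
      have := (hτs ω).2.1
      rwa [hC t h] at this
  -- Astar t = 0
  have At0 : Astar t ω = 0 := by
    rw [hAstar]
    apply Finset.sum_eq_zero
    intro l hl
    have hlt : l < t := Finset.mem_range.mp hl
    have hlJ : l < J := lt_of_lt_of_le hlt htJ
    have hZC : Z l ω < C l ω := (hτs ω).2.2 l hlt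
    rw [hC l hlJ] at hZC
    rw [hY l hlJ ω, max_eq_right hZC.le]
    ring
  have St0 : S t ω = 0 := Szero t le_rfl
  apply le_antisymm
  · -- Y 0 = Z t - M t ≤ sup'
    have : Y 0 ω = Z t ω - M t ω := by
      rw [hMdef]
      have := doob t
      linarith [YZt, At0, St0]
    rw [this]
    exact Finset.le_sup' (fun r => Z r ω - M r ω) (Finset.mem_Icc.mpr ⟨Nat.zero_le t, htJ⟩)
  · apply Finset.sup'_le
    intro r hr
    have hrJ : r ≤ J := (Finset.mem_Icc.mp hr).2
    rw [hMdef]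
    have := doob r
    linarith [ZleY r hrJ, SleA r hrJ]
end

section
/- (Remark 1: uniqueness for martingale cash-flows.) Suppose the reward process Z itself is a nonnegative martingale, i.e. Z_j ≥ 0 and E[Z_{j+1} | F_j] = Z_j for all j. Then the only martingale weakly optimal at 0 is M = M* = Z − Z_0: if M is a martingale with M_0 = 0 and M ∈ M^{∘,0}, then M_j = Z_j − Z_0 almost surely for every 0 ≤ j ≤ J. -/
open MeasureTheory Finset

lemma integrable_finset_sup' {Ω : Type*} {mΩ : MeasurableSpace Ω} {μ : Measure Ω}
    {ι : Type*} (s : Finset ι) (hs : s.Nonempty) (f : ι → Ω → ℝ)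
    (hf : ∀ i ∈ s, Integrable (f i) μ) :
    Integrable (fun ω => s.sup' hs (fun i => f i ω)) μ := by
  induction hs using Finset.Nonempty.cons_induction with
  | singleton i =>
      have : (fun ω => ({i} : Finset ι).sup' (Finset.singleton_nonempty i)
          (fun j => f j ω)) = f i := by
        funext ω
        exact Finset.sup'_singleton _
      rw [this]
      exact hf i (Finset.mem_singleton_self i)
  | cons i s his hs ih =>
      simp only [Finset.sup'_cons hs]
      exact (hf i (by simp)).sup (ih fun j hj => hf j (by simp [hj]))

/-- **Remark 1: uniqueness for martingale cash-flows.** Suppose the reward process `Z` itself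
is a nonnegative martingale. Then the only martingale weakly optimal at `0` is
`M = M⋆ = Z − Z 0`: if `M` is a martingale with `M 0 = 0` that is weakly optimal at `0`, then
`M j = Z j − Z 0` almost surely for every `0 ≤ j ≤ J`. -/
theorem weakly_optimal_at_zero_unique_of_martingale_cashflow
    {Ω : Type*} {mΩ : MeasurableSpace Ω} {μ : Measure Ω} [IsProbabilityMeasure μ]
    (J : ℕ) (ℱ : Filtration ℕ mΩ)
    (Z Y : ℕ → Ω → ℝ)
    (hZ_adapted : Adapted ℱ Z)
    (hZ_int : ∀ j, Integrable (Z j) μ)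
    (hZ_mart : Martingale Z ℱ μ)
    (hZ_nonneg : ∀ j ω, 0 ≤ Z j ω)
    (hYJ : ∀ ω, Y J ω = Z J ω)
    (hY : ∀ j, j < J → ∀ ω, Y j ω = max (Z j ω) ((μ[Y (j + 1) | ℱ j]) ω))
    (M : ℕ → Ω → ℝ) (hM : Martingale M ℱ μ) (hM0 : ∀ ω, M 0 ω = 0)
    (hopt : Y 0 =ᵐ[μ] μ[fun ω => (Finset.Icc 0 J).sup' (Finset.nonempty_Icc.mpr (Nat.zero_le J))
        (fun r => Z r ω - M r ω) | ℱ 0]) :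
    ∀ j, j ≤ J → M j =ᵐ[μ] fun ω => Z j ω - Z 0 ω := by
  set S : Ω → ℝ := fun ω => (Finset.Icc 0 J).sup' (Finset.nonempty_Icc.mpr (Nat.zero_le J))
      (fun r => Z r ω - M r ω) with hSdef
  have hS_int : Integrable S μ :=
    integrable_finset_sup' _ _ _ (fun i _ => (hZ_int i).sub (hM.integrable i))
  -- Y (J - d) = Z (J - d) a.e., by induction on d
  have key : ∀ d : ℕ, Y (J - d) =ᵐ[μ] Z (J - d) := by
    intro d
    induction d with
    | zero =>
        simp only [Nat.sub_zero]
        exact Filter.Eventually.of_forall hYJ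
    | succ d ih =>
        by_cases hd : d < J
        · have hk : J - (d + 1) < J := by omega
          have hk1 : J - (d + 1) + 1 = J - d := by omega
          have hce : μ[Y (J - (d + 1) + 1) | ℱ (J - (d + 1))]
              =ᵐ[μ] Z (J - (d + 1)) := by
            rw [hk1]
            exact (condExp_congr_ae ih).trans
              (hZ_mart.condExp_ae_eq (by omega : J - (d + 1) ≤ J - d))
          filter_upwards [hce] with ω hω
          rw [hY _ hk ω, hω, max_self]
        · have : J - (d + 1) = J - d := by omega
          rw [this]; exact ih
  have hY0 : Y 0 =ᵐ[μ] Z 0 := by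
    have := key J
    rwa [Nat.sub_self] at this
  have hZ0S : Z 0 =ᵐ[μ] μ[S | ℱ 0] := hY0.symm.trans hopt
  have hint_eq : ∫ ω, Z 0 ω ∂μ = ∫ ω, S ω ∂μ := by
    rw [integral_congr_ae hZ0S, integral_condExp (ℱ.le 0)]
  have hge : ∀ ω, Z 0 ω ≤ S ω := by
    intro ω
    have h0 : (0 : ℕ) ∈ Finset.Icc 0 J := by simp
    have := Finset.le_sup' (fun r => Z r ω - M r ω) h0
    simpa only [hM0 ω, sub_zero] using this
  -- S = Z 0 a.e.
  have hSZ : S =ᵐ[μ] Z 0 := by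
    have hnn : 0 ≤ᵐ[μ] fun ω => S ω - Z 0 ω :=
      Filter.Eventually.of_forall fun ω => by have := hge ω; simp; linarith
    have hint : Integrable (fun ω => S ω - Z 0 ω) μ := hS_int.sub (hZ_int 0)
    have hzero : ∫ ω, (S ω - Z 0 ω) ∂μ = 0 := by
      rw [integral_sub hS_int (hZ_int 0)]; linarith
    have := (integral_eq_zero_iff_of_nonneg_ae hnn hint).mp hzero
    filter_upwards [this] with ω hω
    have : S ω - Z 0 ω = 0 := hω
    linarith
  intro j hj
  have hle : ∀ ω, Z j ω - M j ω ≤ S ω := fun ω =>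
    Finset.le_sup' (fun r => Z r ω - M r ω) (by simp [hj] : j ∈ Finset.Icc 0 J)
  have hnn : 0 ≤ᵐ[μ] fun ω => Z 0 ω - (Z j ω - M j ω) := by
    filter_upwards [hSZ] with ω hω
    have := hle ω
    simp only [Pi.zero_apply]
    rw [← hω] at *
    linarith
  have hint : Integrable (fun ω => Z 0 ω - (Z j ω - M j ω)) μ :=
    (hZ_int 0).sub ((hZ_int j).sub (hM.integrable j))
  have hEZ : ∫ ω, Z j ω ∂μ = ∫ ω, Z 0 ω ∂μ := by
    rw [← integral_condExp (ℱ.le 0),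
        integral_congr_ae (hZ_mart.condExp_ae_eq (Nat.zero_le j))]
  have hEM : ∫ ω, M j ω ∂μ = 0 := by
    rw [← integral_condExp (ℱ.le 0),
        integral_congr_ae (hM.condExp_ae_eq (Nat.zero_le j))]
    simp [hM0]
  have hzero : ∫ ω, (Z 0 ω - (Z j ω - M j ω)) ∂μ = 0 := by
    have h1 := integral_sub (hZ_int 0) ((hZ_int j).sub (hM.integrable j))
    have h2 := integral_sub (hZ_int j) (hM.integrable j)
    simp only [Pi.sub_apply] at h1 h2
    rw [h1, h2]
    linarith
  have := (integral_eq_zero_iff_of_nonneg_ae hnn hint).mp hzero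
  filter_upwards [this] with ω hω
  have : Z 0 ω - (Z j ω - M j ω) = 0 := hω
  linarith
end

section
/- (Proposition 3, almost sure identity for the randomized Doob martingale.) Let η_0,…,η_J be randomizers satisfying in addition η_j ≤ Y*_j − Z_j + A*_j almost surely for every j = 0,…,J. Then, for the randomized Doob martingale M̃_j = M*_j − η_j, one has the almost sure identity Y*_0 = max_{0 ≤ j ≤ J} ( Z_j − M*_j + η_j ). -/
/-!
Let `τ` be the first time the Snell envelope meets the reward. Before `τ` the envelope equals
its continuation value, so the compensator `A⋆` vanishes at `τ` and `Z τ - M⋆ τ = Y⋆ 0`; for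
every `j` the constraint on `η j` together with the Doob decomposition gives
`Z j - M⋆ j + η j ≤ Y⋆ 0`. It remains to see that `η τ = 0` almost surely. On the
`ℱ J`-measurable event `{τ = j}` the constraint reads `η j ≤ 0`, while `η j` integrates to zero
over that event because `E[η j | ℱ J] = 0`; hence `η j = 0` there.
-/

open MeasureTheory Finset

theorem ae_eq_zero_on_of_condExp_eq_zero_of_nonpos {Ω : Type*} {m m₀ : MeasurableSpace Ω}
    {μ : Measure Ω} (hm : m ≤ m₀) [SigmaFinite (μ.trim hm)] {f : Ω → ℝ} (hf : Integrable f μ)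
    (hf_condExp : μ[f | m] =ᵐ[μ] 0) {s : Set Ω} (hs : MeasurableSet[m] s)
    (hf_nonpos : ∀ᵐ ω ∂μ, ω ∈ s → f ω ≤ 0) :
    ∀ᵐ ω ∂μ, ω ∈ s → f ω = 0 := by
  have h_int : ∫ ω in s, -f ω ∂μ = 0 := by
    rw [integral_neg, ← setIntegral_condExp hm hf hs,
      setIntegral_congr_ae (hm s hs) (hf_condExp.mono fun _ h _ => h)]
    simp
  have h_nonneg : 0 ≤ᵐ[μ.restrict s] fun ω => -f ω := by
    rw [Filter.EventuallyLE, ae_restrict_iff' (hm s hs)]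
    filter_upwards [hf_nonpos] with ω h hω
    simpa using h hω
  have h_zero := (setIntegral_eq_zero_iff_of_nonneg_ae h_nonneg hf.neg.integrableOn).1 h_int
  rw [Filter.EventuallyEq, ae_restrict_iff' (hm s hs)] at h_zero
  filter_upwards [h_zero] with ω h hω
  simpa using h hω

def firstMeetingEvent {Ω : Type*} (Y Z : ℕ → Ω → ℝ) (j : ℕ) : Set Ω :=
  {ω | Y j ω = Z j ω ∧ ∀ l < j, Y l ω ≠ Z l ω}

theorem exists_mem_firstMeetingEvent {Ω : Type*} {Y Z : ℕ → Ω → ℝ} {J : ℕ} {ω : Ω}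
    (hJ : Y J ω = Z J ω) : ∃ j ≤ J, ω ∈ firstMeetingEvent Y Z j :=
  have h : ∃ j, Y j ω = Z j ω := ⟨J, hJ⟩
  ⟨Nat.find h, Nat.find_min' h hJ, Nat.find_spec h, fun _ hl => Nat.find_min h hl⟩

section SnellEnvelope

variable {Ω : Type*} {mΩ : MeasurableSpace Ω} {μ : Measure Ω} {J : ℕ} {ℱ : Filtration ℕ mΩ}
  {Z Y Mstar Astar : ℕ → Ω → ℝ}

theorem measurable_snellEnvelope (hZ_adapted : Adapted ℱ Z) (hYJ : ∀ ω, Y J ω = Z J ω)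
    (hY : ∀ j, j < J → ∀ ω, Y j ω = max (Z j ω) ((μ[Y (j + 1) | ℱ j]) ω)) {j : ℕ}
    (hj : j ≤ J) : Measurable[ℱ j] (Y j) := by
  rcases hj.lt_or_eq with hj | rfl
  · rw [funext (hY j hj)]
    exact (hZ_adapted j).max stronglyMeasurable_condExp.measurable
  · rw [funext hYJ]
    exact hZ_adapted j

theorem measurableSet_firstMeetingEvent (hZ_adapted : Adapted ℱ Z)
    (hY_meas : ∀ j ≤ J, Measurable[ℱ j] (Y j)) {j : ℕ} (hj : j ≤ J) :
    MeasurableSet[ℱ j] (firstMeetingEvent Y Z j) := by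
  have h_eq : ∀ l ≤ j, MeasurableSet[ℱ j] {ω | Y l ω = Z l ω} := fun l hl =>
    measurableSet_eq_fun ((hY_meas l (hl.trans hj)).mono (ℱ.mono hl) le_rfl)
      ((hZ_adapted l).mono (ℱ.mono hl) le_rfl)
  simp only [firstMeetingEvent, Set.ofPred_and, Set.ofPred_forall]
  exact (h_eq j le_rfl).inter <|
    MeasurableSet.iInter fun l => MeasurableSet.iInter fun hl => (h_eq l hl.le).compl

theorem doob_sub_compensator_eq
    (hMstar : ∀ j ω, Mstar j ω =
      ∑ l ∈ Finset.range j, (Y (l + 1) ω - (μ[Y (l + 1) | ℱ l]) ω))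
    (hAstar : ∀ j ω, Astar j ω =
      ∑ l ∈ Finset.range j, (Y l ω - (μ[Y (l + 1) | ℱ l]) ω)) (j : ℕ) (ω : Ω) :
    Mstar j ω - Astar j ω = Y j ω - Y 0 ω := by
  rw [hMstar, hAstar, ← sum_sub_distrib, ← sum_range_sub (Y · ω)]
  exact sum_congr rfl fun l _ => by ring

theorem compensator_eq_zero_of_mem_firstMeetingEvent
    (hY : ∀ j, j < J → ∀ ω, Y j ω = max (Z j ω) ((μ[Y (j + 1) | ℱ j]) ω))
    (hAstar : ∀ j ω, Astar j ω =
      ∑ l ∈ Finset.range j, (Y l ω - (μ[Y (l + 1) | ℱ l]) ω))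
    {j : ℕ} (hj : j ≤ J) {ω : Ω} (hω : ω ∈ firstMeetingEvent Y Z j) :
    Astar j ω = 0 := by
  rw [hAstar]
  refine sum_eq_zero fun l hl => ?_
  have hlj : l < j := mem_range.1 hl
  have hYl := hY l (hlj.trans_le hj) ω
  rcases max_choice (Z l ω) ((μ[Y (l + 1) | ℱ l]) ω) with h | h
  · exact absurd (hYl.trans h) (hω.2 l hlj)
  · rw [hYl, h, sub_self]

theorem ae_eq_zero_on_firstMeetingEvent [SigmaFinite (μ.trim (ℱ.le J))]
    (hZ_adapted : Adapted ℱ Z) (hYJ : ∀ ω, Y J ω = Z J ω)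
    (hY : ∀ j, j < J → ∀ ω, Y j ω = max (Z j ω) ((μ[Y (j + 1) | ℱ j]) ω))
    (hAstar : ∀ j ω, Astar j ω =
      ∑ l ∈ Finset.range j, (Y l ω - (μ[Y (l + 1) | ℱ l]) ω))
    {η : Ω → ℝ} (hη_int : Integrable η μ) (hη_mean : μ[η | ℱ J] =ᵐ[μ] 0) {j : ℕ} (hj : j ≤ J)
    (hη_le : ∀ᵐ ω ∂μ, η ω ≤ Y j ω - Z j ω + Astar j ω) :
    ∀ᵐ ω ∂μ, ω ∈ firstMeetingEvent Y Z j → η ω = 0 := by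
  have hE_meas : MeasurableSet[ℱ J] (firstMeetingEvent Y Z j) :=
    ℱ.mono hj _ <| measurableSet_firstMeetingEvent hZ_adapted
      (fun _ hk => measurable_snellEnvelope hZ_adapted hYJ hY hk) hj
  refine ae_eq_zero_on_of_condExp_eq_zero_of_nonpos (ℱ.le J) hη_int hη_mean hE_meas ?_
  filter_upwards [hη_le] with ω h hω
  rw [hω.1, compensator_eq_zero_of_mem_firstMeetingEvent hY hAstar hj hω] at h
  linarith

end SnellEnvelope

theorem randomized_doob_martingale_almost_sure_identity_general
    {Ω : Type*} {mΩ : MeasurableSpace Ω} {μ : Measure Ω} [IsProbabilityMeasure μ]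
    (J : ℕ) (ℱ : Filtration ℕ mΩ)
    (Z Y Mstar Astar : ℕ → Ω → ℝ)
    (hZ_adapted : Adapted ℱ Z)
    (hYJ : ∀ ω, Y J ω = Z J ω)
    (hY : ∀ j, j < J → ∀ ω, Y j ω = max (Z j ω) ((μ[Y (j + 1) | ℱ j]) ω))
    (hMstar : ∀ j ω, Mstar j ω =
      ∑ l ∈ Finset.range j, (Y (l + 1) ω - (μ[Y (l + 1) | ℱ l]) ω))
    (hAstar : ∀ j ω, Astar j ω =
      ∑ l ∈ Finset.range j, (Y l ω - (μ[Y (l + 1) | ℱ l]) ω))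
    -- the randomizers
    (η : ℕ → Ω → ℝ)
    (hη_int : ∀ j, Integrable (η j) μ)
    (hη_mean : ∀ j, μ[η j | ℱ J] =ᵐ[μ] 0)
    (hη_le : ∀ j, j ≤ J → ∀ᵐ ω ∂μ, η j ω ≤ Y j ω - Z j ω + Astar j ω) :
    ∀ᵐ ω ∂μ, Y 0 ω = (Finset.Icc 0 J).sup' (Finset.nonempty_Icc.mpr (Nat.zero_le J))
        (fun j => Z j ω - Mstar j ω + η j ω) := by
  have h_bound : ∀ᵐ ω ∂μ, ∀ j ≤ J, Z j ω - Mstar j ω + η j ω ≤ Y 0 ω := by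
    refine (Filter.eventually_all_finite (Set.finite_Iic J)).2 fun j hj => ?_
    filter_upwards [hη_le j hj] with ω h
    linarith [doob_sub_compensator_eq hMstar hAstar j ω]
  have h_zero : ∀ᵐ ω ∂μ, ∀ j ≤ J, ω ∈ firstMeetingEvent Y Z j → η j ω = 0 :=
    (Filter.eventually_all_finite (Set.finite_Iic J)).2 fun j hj =>
      ae_eq_zero_on_firstMeetingEvent hZ_adapted hYJ hY hAstar (hη_int j) (hη_mean j) hj
        (hη_le j hj)
  filter_upwards [h_bound, h_zero] with ω h_bound h_zero
  obtain ⟨j, hjJ, hω⟩ := exists_mem_firstMeetingEvent (hYJ ω)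
  refine le_antisymm (le_sup'_of_le _ (mem_Icc.2 ⟨j.zero_le, hjJ⟩) ?_)
    (sup'_le _ _ fun k hk => h_bound k (mem_Icc.1 hk).2)
  have h_doob := doob_sub_compensator_eq hMstar hAstar j ω
  rw [compensator_eq_zero_of_mem_firstMeetingEvent hY hAstar hjJ hω, hω.1] at h_doob
  linarith [h_zero j hjJ hω]

/-- **Proposition 3, almost sure identity for the randomized Doob martingale.** Let
`η 0,…,η J` be randomizers (integrable random variables with `E[η j | ℱ J] = 0`) satisfying in
addition `η j ≤ Y j − Z j + A⋆ j` almost surely for every `j = 0,…,J`. Then, for the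
randomized Doob martingale `M̃ j = M⋆ j − η j`, one has the almost sure identity
`Y⋆ 0 = max_{0 ≤ j ≤ J} (Z j − M⋆ j + η j)`. -/
theorem randomized_doob_martingale_almost_sure_identity
    {Ω : Type*} {mΩ : MeasurableSpace Ω} {μ : Measure Ω} [IsProbabilityMeasure μ]
    (J : ℕ) (ℱ : Filtration ℕ mΩ)
    (hF0 : ∀ s : Set Ω, MeasurableSet[ℱ 0] s → μ s = 0 ∨ μ s = 1)
    (Z Y Mstar Astar : ℕ → Ω → ℝ)
    (hZ_adapted : Adapted ℱ Z)
    (hZ_int : ∀ j, Integrable (Z j) μ)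
    (hYJ : ∀ ω, Y J ω = Z J ω)
    (hY : ∀ j, j < J → ∀ ω, Y j ω = max (Z j ω) ((μ[Y (j + 1) | ℱ j]) ω))
    (hMstar : ∀ j ω, Mstar j ω =
      ∑ l ∈ Finset.range j, (Y (l + 1) ω - (μ[Y (l + 1) | ℱ l]) ω))
    (hAstar : ∀ j ω, Astar j ω =
      ∑ l ∈ Finset.range j, (Y l ω - (μ[Y (l + 1) | ℱ l]) ω))
    -- the randomizers
    (η : ℕ → Ω → ℝ)
    (hη_int : ∀ j, Integrable (η j) μ)
    (hη_mean : ∀ j, μ[η j | ℱ J] =ᵐ[μ] 0)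
    (hη_le : ∀ j, j ≤ J → ∀ᵐ ω ∂μ, η j ω ≤ Y j ω - Z j ω + Astar j ω) :
    ∀ᵐ ω ∂μ, Y 0 ω = (Finset.Icc 0 J).sup' (Finset.nonempty_Icc.mpr (Nat.zero_le J))
        (fun j => Z j ω - Mstar j ω + η j ω) :=
  randomized_doob_martingale_almost_sure_identity_general J ℱ Z Y Mstar Astar hZ_adapted hYJ hY
    hMstar hAstar η hη_int hη_mean hη_le
end
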